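/- arXiv:2104.11605 — 9 statements merged into one kernel-verified Lean document; each statement's English description precedes it below -/
import Mathlib

section
/- Conversely, if Φ : ℝ^N → ℝ is a function such that both Φ + (σ/2)‖·‖² is convex and Φ − (σ/2)‖·‖² is concave for some σ > 0, then Φ is differentiable and its gradient is σ-Lipschitz. -/
/-!
Semiconvexity and semiconcavity with parameter `σ` are `StrongConvexOn univ (-σ) Φ` and
`StrongConcaveOn univ (-σ) Φ`. On every line, `Φ` is a convex function minus a smooth one and a
concave function plus a smooth one, so its one-sided derivatives agree, and the directional
derivative `D v` at `x` satisfies `|Φ (x + v) - Φ x - D v| ≤ σ / 2 * ‖v‖ ^ 2`. The pairs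
`x + (v + w), x` and `x + v, x + w` have the same midpoint, so the midpoint inequalities make `D`
additive up to a quadratic error, hence additive by homogeneity: `D` is the Fréchet derivative.
Finally `Φ + σ / 2 * ‖·‖ ^ 2` is convex and `2σ`-smooth, and co-coercivity of its gradient
`∇Φ + σ • id` is exactly the bound `‖∇Φ x - ∇Φ y‖ ≤ σ * ‖x - y‖`.
-/

open Set Filter Topology Asymptotics
open scoped RealInnerProductSpace

theorem ConvexOn.differentiableAt_of_differentiableAt_sub {g h : ℝ → ℝ} {x : ℝ}
    (hg : ConvexOn ℝ univ g) (hh : ConcaveOn ℝ univ h) (hgh : DifferentiableAt ℝ (g - h) x) :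
    DifferentiableAt ℝ g x := by
  have hx : x ∈ interior (univ : Set ℝ) := by rw [interior_univ]; exact mem_univ x
  have hR := hg.hasDerivWithinAt_rightDeriv_of_mem_interior hx
  have hL := hg.hasDerivWithinAt_leftDeriv_of_mem_interior hx
  have hR' : HasDerivWithinAt (-h) (deriv (g - h) x - derivWithin g (Ioi x) x) (Ioi x) x := by
    simpa only [sub_sub_cancel_left] using hgh.hasDerivAt.hasDerivWithinAt.sub hR
  have hL' : HasDerivWithinAt (-h) (deriv (g - h) x - derivWithin g (Iio x) x) (Iio x) x := by
    simpa only [sub_sub_cancel_left] using hgh.hasDerivAt.hasDerivWithinAt.sub hL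
  have hRL : derivWithin g (Ioi x) x ≤ derivWithin g (Iio x) x := by
    have := hh.neg.leftDeriv_le_rightDeriv_of_mem_interior hx
    rw [hR'.derivWithin (uniqueDiffWithinAt_Ioi x),
      hL'.derivWithin (uniqueDiffWithinAt_Iio x)] at this
    linarith
  rw [le_antisymm (hg.leftDeriv_le_rightDeriv_of_mem_interior hx) hRL] at hL
  exact (hasDerivAt_iff_tendsto_slope_left_right.2
    ⟨(hasDerivWithinAt_iff_tendsto_slope' self_notMem_Iio).1 hL,
     (hasDerivWithinAt_iff_tendsto_slope' self_notMem_Ioi).1 hR⟩).differentiableAt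

section Real

variable {c : ℝ} {φ : ℝ → ℝ}

theorem StrongConvexOn.convexOn_add_sq (h : StrongConvexOn univ (-c) φ) :
    ConvexOn ℝ univ fun t => φ t + c / 2 * t ^ 2 := by
  simpa [neg_div] using strongConvexOn_iff_convex.1 h

theorem StrongConcaveOn.concaveOn_sub_sq (h : StrongConcaveOn univ (-c) φ) :
    ConcaveOn ℝ univ fun t => φ t - c / 2 * t ^ 2 := by
  simpa [neg_div, ← sub_eq_add_neg] using strongConcaveOn_iff_convex.1 h

theorem Real.differentiable_of_strongConvexOn_of_strongConcaveOn
    (h₁ : StrongConvexOn univ (-c) φ) (h₂ : StrongConcaveOn univ (-c) φ) :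
    Differentiable ℝ φ := by
  intro t
  have hg := h₁.convexOn_add_sq.differentiableAt_of_differentiableAt_sub (x := t)
    h₂.concaveOn_sub_sq (by simp only [Pi.sub_def, add_sub_sub_cancel]; fun_prop)
  simpa only [Pi.sub_def, add_sub_cancel_right] using
    hg.sub (differentiableAt_pow 2 |>.const_mul (c / 2))

theorem Real.abs_sub_sub_deriv_le_of_strongConvexOn_of_strongConcaveOn
    (h₁ : StrongConvexOn univ (-c) φ) (h₂ : StrongConcaveOn univ (-c) φ) :
    |φ 1 - φ 0 - deriv φ 0| ≤ c / 2 := by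
  have hφ := (differentiable_of_strongConvexOn_of_strongConcaveOn h₁ h₂ 0).hasDerivAt
  have hq : HasDerivAt (fun t : ℝ => c / 2 * t ^ 2) 0 0 := by
    simpa using (hasDerivAt_pow 2 (0 : ℝ)).const_mul (c / 2)
  have upper := h₁.convexOn_add_sq.le_slope_of_hasDerivAt (mem_univ 0) (mem_univ 1) one_pos
    (hφ.add hq)
  have lower := h₂.concaveOn_sub_sq.slope_le_of_hasDerivAt (mem_univ 0) (mem_univ 1) one_pos
    (hφ.sub hq)
  rw [slope_def_field] at upper lower
  rw [abs_le]
  constructor <;> norm_num at upper lower ⊢ <;> linarith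

end Real

theorem hasFDerivAt_of_norm_sub_sub_le_sq {𝕜 E F : Type*} [NontriviallyNormedField 𝕜]
    [NormedAddCommGroup E] [NormedSpace 𝕜 E] [NormedAddCommGroup F] [NormedSpace 𝕜 F]
    {f : E → F} {L : E →L[𝕜] F} {x : E} {C : ℝ}
    (h : ∀ v, ‖f (x + v) - f x - L v‖ ≤ C * ‖v‖ ^ 2) : HasFDerivAt f L x := by
  rw [hasFDerivAt_iff_isLittleO_nhds_zero]
  refine (IsBigO.of_bound C (Eventually.of_forall fun v => ?_)).trans_isLittleO
    (isLittleO_norm_pow_id one_lt_two)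
  simpa only [norm_pow, norm_norm] using h v

theorem eq_zero_of_forall_pos_abs_le_mul {a K : ℝ} (h : ∀ t : ℝ, 0 < t → |a| ≤ t * K) : a = 0 := by
  have hlim : Tendsto (fun t : ℝ => t * K) (𝓝[>] 0) (𝓝 0) := by
    simpa using tendsto_nhdsWithin_of_tendsto_nhds
      ((continuous_mul_const K).tendsto (0 : ℝ))
  exact abs_nonpos_iff.1 (ge_of_tendsto hlim (eventually_nhdsWithin_of_forall h))

section NormedSpace

variable {E : Type*} [NormedAddCommGroup E] [NormedSpace ℝ E]

theorem StrongConvexOn.comp_line {m : ℝ} {f : E → ℝ} (hf : StrongConvexOn univ m f) (x v : E) :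
    StrongConvexOn univ (m * ‖v‖ ^ 2) fun t : ℝ => f (x + t • v) := by
  refine ⟨convex_univ, fun s _ t _ a b ha hb hab => ?_⟩
  have hpt : x + (a * s + b * t) • v = a • (x + s • v) + b • (x + t • v) := by
    calc x + (a * s + b * t) • v = (a + b) • x + (a * s + b * t) • v := by rw [hab, one_smul]
      _ = _ := by module
  have hdist : ‖(x + s • v) - (x + t • v)‖ = ‖s - t‖ * ‖v‖ := by
    rw [add_sub_add_left_eq_sub, ← sub_smul, norm_smul]
  have := hf.2 (mem_univ (x + s • v)) (mem_univ (x + t • v)) ha hb hab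
  rw [hdist] at this
  simp only [smul_eq_mul] at this ⊢
  rw [hpt]
  linarith

theorem StrongConcaveOn.comp_line {m : ℝ} {f : E → ℝ} (hf : StrongConcaveOn univ m f) (x v : E) :
    StrongConcaveOn univ (m * ‖v‖ ^ 2) fun t : ℝ => f (x + t • v) := by
  have hneg : StrongConvexOn univ m (-f) := UniformConcaveOn.neg hf
  have := UniformConvexOn.neg (hneg.comp_line x v)
  simp only [Pi.neg_def, neg_neg] at this
  exact this

theorem map_add_of_abs_map_add_sub_le {D : E → ℝ} {C : ℝ} (hD : ∀ (t : ℝ) v, D (t • v) = t * D v)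
    (hC : ∀ v w, |D (v + w) - D v - D w| ≤ C * (‖v‖ + ‖w‖) ^ 2) (v w : E) :
    D (v + w) = D v + D w := by
  suffices D (v + w) - D v - D w = 0 by linarith
  refine eq_zero_of_forall_pos_abs_le_mul (K := C * (‖v‖ + ‖w‖) ^ 2) fun t ht => ?_
  have := hC (t • v) (t • w)
  rw [← smul_add, hD, hD, hD, norm_smul, norm_smul, Real.norm_of_nonneg ht.le,
    ← mul_sub, ← mul_sub, abs_mul, abs_of_pos ht] at this
  nlinarith

variable {σ : ℝ} {Φ : E → ℝ} (h₁ : StrongConvexOn univ (-σ) Φ) (h₂ : StrongConcaveOn univ (-σ) Φ)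
include h₁ h₂

theorem StrongConvexOn.hasLineDerivAt_of_strongConcaveOn (x v : E) :
    HasLineDerivAt ℝ Φ (lineDeriv ℝ Φ x v) x v := by
  have h₁' := h₁.comp_line x v
  have h₂' := h₂.comp_line x v
  rw [neg_mul] at h₁' h₂'
  exact (Real.differentiable_of_strongConvexOn_of_strongConcaveOn h₁' h₂' 0).hasDerivAt

theorem StrongConvexOn.abs_sub_sub_lineDeriv_le (x v : E) :
    |Φ (x + v) - Φ x - lineDeriv ℝ Φ x v| ≤ σ / 2 * ‖v‖ ^ 2 := by
  have h₁' := h₁.comp_line x v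
  have h₂' := h₂.comp_line x v
  rw [neg_mul] at h₁' h₂'
  have := Real.abs_sub_sub_deriv_le_of_strongConvexOn_of_strongConcaveOn h₁' h₂'
  simp only [one_smul, zero_smul, add_zero] at this
  exact this.trans_eq (by ring)

theorem StrongConvexOn.abs_add_add_sub_two_mul_le (y u : E) :
    |Φ (y + u) + Φ (y - u) - 2 * Φ y| ≤ σ * ‖u‖ ^ 2 := by
  have hmid : (1 / 2 : ℝ) • (y + u) + (1 / 2 : ℝ) • (y - u) = y := by module
  have hdist : ‖(y + u) - (y - u)‖ = 2 * ‖u‖ := by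
    rw [show (y + u) - (y - u) = (2 : ℝ) • u by module, norm_smul, Real.norm_two]
  have upper := h₁.2 (mem_univ (y + u)) (mem_univ (y - u)) (by norm_num : (0 : ℝ) ≤ 1 / 2)
    (by norm_num : (0 : ℝ) ≤ 1 / 2) (by norm_num)
  have lower := h₂.2 (mem_univ (y + u)) (mem_univ (y - u)) (by norm_num : (0 : ℝ) ≤ 1 / 2)
    (by norm_num : (0 : ℝ) ≤ 1 / 2) (by norm_num)
  rw [hmid, hdist, smul_eq_mul, smul_eq_mul] at upper lower
  rw [abs_le]
  constructor <;> linarith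

theorem StrongConvexOn.abs_lineDeriv_add_sub_le (hσ : 0 ≤ σ) (x v w : E) :
    |lineDeriv ℝ Φ x (v + w) - lineDeriv ℝ Φ x v - lineDeriv ℝ Φ x w| ≤
      2 * σ * (‖v‖ + ‖w‖) ^ 2 := by
  have hS := h₁.abs_sub_sub_lineDeriv_le h₂ x
  have hM := h₁.abs_add_add_sub_two_mul_le h₂ (x + (1 / 2 : ℝ) • (v + w))
  have m₁ := hM ((1 / 2 : ℝ) • (v + w))
  have m₂ := hM ((1 / 2 : ℝ) • (v - w))
  rw [show x + (1 / 2 : ℝ) • (v + w) + (1 / 2 : ℝ) • (v + w) = x + (v + w) by module,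
    show x + (1 / 2 : ℝ) • (v + w) - (1 / 2 : ℝ) • (v + w) = x by module] at m₁
  rw [show x + (1 / 2 : ℝ) • (v + w) + (1 / 2 : ℝ) • (v - w) = x + v by module,
    show x + (1 / 2 : ℝ) • (v + w) - (1 / 2 : ℝ) • (v - w) = x + w by module] at m₂
  have hB : ∀ u : E, ‖u‖ ≤ ‖v‖ + ‖w‖ → σ * ‖u‖ ^ 2 ≤ σ * (‖v‖ + ‖w‖) ^ 2 := fun u hu =>
    mul_le_mul_of_nonneg_left (pow_le_pow_left₀ (norm_nonneg u) hu 2) hσ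
  have b₁ := hB (v + w) (norm_add_le v w)
  have b₂ := hB (v - w) (norm_sub_le v w)
  have b₃ := hB v (le_add_of_nonneg_right (norm_nonneg w))
  have b₄ := hB w (le_add_of_nonneg_left (norm_nonneg v))
  simp only [norm_smul, mul_pow, Real.norm_of_nonneg (by norm_num : (0 : ℝ) ≤ 1 / 2)] at m₁ m₂
  have s₁ := abs_le.1 (hS (v + w))
  have s₂ := abs_le.1 (hS v)
  have s₃ := abs_le.1 (hS w)
  have m₁' := abs_le.1 m₁
  have m₂' := abs_le.1 m₂
  rw [abs_le]
  constructor <;> linarith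

theorem StrongConvexOn.isLinearMap_lineDeriv (hσ : 0 ≤ σ) (x : E) :
    IsLinearMap ℝ (lineDeriv ℝ Φ x) := by
  have hsmul : ∀ (t : ℝ) v, lineDeriv ℝ Φ x (t • v) = t * lineDeriv ℝ Φ x v := fun t v =>
    ((h₁.hasLineDerivAt_of_strongConcaveOn h₂ x v).smul t).lineDeriv
  exact ⟨map_add_of_abs_map_add_sub_le hsmul (h₁.abs_lineDeriv_add_sub_le h₂ hσ x), hsmul⟩

variable [FiniteDimensional ℝ E]

theorem StrongConvexOn.differentiable_of_strongConcaveOn (hσ : 0 ≤ σ) : Differentiable ℝ Φ :=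
  fun x => (hasFDerivAt_of_norm_sub_sub_le_sq (C := σ / 2)
    (L := LinearMap.toContinuousLinearMap (h₁.isLinearMap_lineDeriv h₂ hσ x).mk')
    fun v => h₁.abs_sub_sub_lineDeriv_le h₂ x v).differentiableAt

theorem StrongConvexOn.abs_sub_sub_fderiv_le (hσ : 0 ≤ σ) (x v : E) :
    |Φ (x + v) - Φ x - fderiv ℝ Φ x v| ≤ σ / 2 * ‖v‖ ^ 2 := by
  rw [← (h₁.differentiable_of_strongConcaveOn h₂ hσ x).lineDeriv_eq_fderiv]
  exact h₁.abs_sub_sub_lineDeriv_le h₂ x v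

end NormedSpace

section Inner
variable {E : Type*} [NormedAddCommGroup E] [InnerProductSpace ℝ E]

theorem sq_norm_sub_le_mul_inner_sub {L : ℝ} (hL : 0 < L) {g : E → ℝ} {G : E → E}
    (hlow : ∀ x y, g x + ⟪G x, y - x⟫ ≤ g y)
    (hup : ∀ x y, g y ≤ g x + ⟪G x, y - x⟫ + L / 2 * ‖y - x‖ ^ 2) (x y : E) :
    ‖G x - G y‖ ^ 2 ≤ L * ⟪G x - G y, x - y⟫ := by
  have key : ∀ x y, g x + ⟪G x, y - x⟫ + L⁻¹ / 2 * ‖G y - G x‖ ^ 2 ≤ g y := by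
    intro x y
    set c := G y - G x
    -- compare both bounds at the gradient step `y - L⁻¹ • c`
    have h₁ := hlow x (y - L⁻¹ • c)
    have h₂ := hup y (y - L⁻¹ • c)
    rw [sub_right_comm, inner_sub_right, real_inner_smul_right] at h₁
    rw [sub_sub_cancel_left, inner_neg_right, real_inner_smul_right, norm_neg, norm_smul,
      Real.norm_of_nonneg (inv_nonneg.2 hL.le)] at h₂
    have hc : ⟪G y, c⟫ - ⟪G x, c⟫ = ‖c‖ ^ 2 := by
      rw [← inner_sub_left, real_inner_self_eq_norm_sq]
    have hLinv : L * L⁻¹ = 1 := mul_inv_cancel₀ hL.ne'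
    linear_combination h₁ + h₂ - L⁻¹ * hc + L⁻¹ * ‖c‖ ^ 2 / 2 * hLinv
  have hsum : ⟪G y, x - y⟫ + ⟪G x, y - x⟫ = -⟪G x - G y, x - y⟫ := by
    rw [← neg_sub x y, inner_neg_right, inner_sub_left]; ring
  have hxy := key x y
  have hyx := key y x
  rw [norm_sub_rev] at hxy
  have : L⁻¹ * ‖G x - G y‖ ^ 2 ≤ ⟪G x - G y, x - y⟫ := by linarith
  rwa [inv_mul_le_iff₀ hL] at this

theorem norm_sub_le_of_abs_sub_sub_le [CompleteSpace E] {σ : ℝ} (hσ : 0 < σ) {f : E → ℝ}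
    {L : E → StrongDual ℝ E} (h : ∀ x v, |f (x + v) - f x - L x v| ≤ σ / 2 * ‖v‖ ^ 2)
    (x y : E) : ‖L x - L y‖ ≤ σ * ‖x - y‖ := by
  set G : E → E := fun z => (InnerProductSpace.toDual ℝ E).symm (L z)
  have hG : ∀ x y, |f y - f x - ⟪G x, y - x⟫| ≤ σ / 2 * ‖y - x‖ ^ 2 := fun x y => by
    simpa only [InnerProductSpace.toDual_symm_apply, add_sub_cancel, G] using h x (y - x)
  have hq : ∀ x y : E,
      σ / 2 * ‖y‖ ^ 2 - σ / 2 * ‖x‖ ^ 2 - ⟪σ • x, y - x⟫ = σ / 2 * ‖y - x‖ ^ 2 := by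
    intro x y
    rw [norm_sub_sq_real, real_inner_smul_left, inner_sub_right, real_inner_self_eq_norm_sq,
      real_inner_comm]
    ring
  have hco := sq_norm_sub_le_mul_inner_sub (by positivity : 0 < 2 * σ)
    (g := fun z => f z + σ / 2 * ‖z‖ ^ 2) (G := fun z => G z + σ • z)
    (fun x y => by
      have := (abs_le.1 (hG x y)).1; have := hq x y; simp only [inner_add_left]; linarith)
    (fun x y => by
      have := (abs_le.1 (hG x y)).2; have := hq x y; simp only [inner_add_left]; linarith)
    x y
  have hsplit : (G x + σ • x) - (G y + σ • y) = (G x - G y) + σ • (x - y) := by module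
  rw [hsplit, norm_add_sq_real, inner_add_left, real_inner_smul_left, real_inner_smul_right,
    norm_smul, real_inner_self_eq_norm_sq, Real.norm_of_nonneg hσ.le] at hco
  have hsq : ‖G x - G y‖ ^ 2 ≤ (σ * ‖x - y‖) ^ 2 := by linear_combination hco
  have hnorm : ‖L x - L y‖ = ‖G x - G y‖ := by
    simp only [← map_sub, LinearIsometryEquiv.norm_map, G]
  rw [hnorm]
  exact (pow_le_pow_iff_left₀ (norm_nonneg _) (by positivity) two_ne_zero).1 hsq

end Inner

/-- Converse: if `Φ + (σ/2)‖·‖²` is convex and `Φ - (σ/2)‖·‖²` is concave for some σ > 0,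
then `Φ` is differentiable with σ-Lipschitz gradient (σ-strongly smooth). -/
theorem stmt5 (N : ℕ) (σ : ℝ) (hσ : 0 < σ)
    (Φ : EuclideanSpace ℝ (Fin N) → ℝ)
    (hconv : ConvexOn ℝ Set.univ (fun x => Φ x + (σ / 2) * ‖x‖ ^ 2))
    (hconc : ConcaveOn ℝ Set.univ (fun x => Φ x - (σ / 2) * ‖x‖ ^ 2)) :
    Differentiable ℝ Φ ∧ ∀ x y, ‖fderiv ℝ Φ x - fderiv ℝ Φ y‖ ≤ σ * ‖x - y‖ := by
  have h₁ : StrongConvexOn univ (-σ) Φ :=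
    strongConvexOn_iff_convex.2 (by simpa [neg_div] using hconv)
  have h₂ : StrongConcaveOn univ (-σ) Φ :=
    strongConcaveOn_iff_convex.2 (by simpa [neg_div, ← sub_eq_add_neg] using hconc)
  exact ⟨h₁.differentiable_of_strongConcaveOn h₂ hσ.le,
    norm_sub_le_of_abs_sub_sub_le hσ (h₁.abs_sub_sub_fderiv_le h₂ hσ.le)⟩
end

section
/- Let C be a convex subset of ℝ^N (with the coordinatewise order) with nonempty interior and Φ : C → ℝ a convex function continuous on C and Gâteaux differentiable on the interior of C. Then Φ is isotone on C (x ≤ y implies Φ(x) ≤ Φ(y)) if and only if ∇Φ(a) ≥ 0 (all partial derivatives nonnegative) for all a in the interior of C. -/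
/-!
At an interior point `a`, monotonicity makes `a` a minimum of `Φ` on `C ∩ [a, ∞)`, whose positive
tangent cone contains every `v ≥ 0`, so Fermat's rule gives `DΦ(a) v ≥ 0`. Conversely, nonnegative
partial derivatives make `DΦ(z) (y - x) ≥ 0` whenever `x ≤ y`, and the mean value theorem on the
convex set `int C` yields monotonicity there. It extends to `C` by continuity: for `x ≤ y` in `C`
and `c ∈ int C`, the points `x + t (c - x) ≤ y + t (c - y)` lie in `int C` for `0 < t ≤ 1`.
-/

open Filter Topology Set AffineMap

theorem LinearMap.map_nonneg_of_map_single_nonneg {ι M : Type*} [Fintype ι] [DecidableEq ι]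
    [AddCommGroup M] [Module ℝ M] [PartialOrder M] [IsOrderedAddMonoid M] [PosSMulMono ℝ M]
    (L : (ι → ℝ) →ₗ[ℝ] M) (hL : ∀ i, 0 ≤ L (Pi.single i 1)) {v : ι → ℝ} (hv : 0 ≤ v) :
    0 ≤ L v := by
  rw [← Finset.univ_sum_single v, map_sum]
  refine Finset.sum_nonneg fun i _ => ?_
  rw [← mul_one (v i), ← smul_eq_mul, Pi.single_smul', map_smul]
  exact smul_nonneg (hv i) (hL i)

theorem Convex.monotoneOn_of_monotoneOn_interior {E β : Type*} [AddCommGroup E] [Module ℝ E]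
    [TopologicalSpace E] [IsTopologicalAddGroup E] [ContinuousSMul ℝ E] [PartialOrder E]
    [IsOrderedAddMonoid E] [IsStrictOrderedModule ℝ E] [Preorder β] [TopologicalSpace β]
    [OrderClosedTopology β] {f : E → β} {s : Set E} (hs : Convex ℝ s)
    (hs' : (interior s).Nonempty) (hf : ContinuousOn f s) (hmono : MonotoneOn f (interior s)) :
    MonotoneOn f s := by
  obtain ⟨c, hc⟩ := hs'
  have hinterior : ∀ z ∈ s, ∀ᶠ t in 𝓝[>] (0 : ℝ), lineMap z c t ∈ interior s := by
    intro z hz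
    filter_upwards [Ioc_mem_nhdsGT one_pos] with t ht
    rw [lineMap_apply_module, add_comm]
    exact hs.combo_interior_closure_mem_interior hc (subset_closure hz) ht.1
      (sub_nonneg.2 ht.2) (by ring)
  have hlim : ∀ z ∈ s, Tendsto (fun t : ℝ => f (lineMap z c t)) (𝓝[>] 0) (𝓝 (f z)) := by
    intro z hz
    have hline : Tendsto (lineMap z c) (𝓝[>] (0 : ℝ)) (𝓝 z) := by
      simpa using (lineMap_continuous.tendsto (0 : ℝ)).mono_left nhdsWithin_le_nhds
    exact (hf z hz).tendsto.comp <| tendsto_nhdsWithin_iff.2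
      ⟨hline, (hinterior z hz).mono fun _ h => interior_subset h⟩
  intro x hx y hy hxy
  refine le_of_tendsto_of_tendsto (hlim x hx) (hlim y hy) ?_
  filter_upwards [hinterior x hx, hinterior y hy, Ioc_mem_nhdsGT one_pos] with t htx hty ht
  exact hmono htx hty (lineMap_mono_left hxy ht.2)

section OrderedNormedSpace

variable {E : Type*} [NormedAddCommGroup E] [NormedSpace ℝ E] [PartialOrder E]
  [IsOrderedAddMonoid E] {f : E → ℝ} {s : Set E}

theorem MonotoneOn.fderiv_nonneg [PosSMulMono ℝ E] {a v : E} (hf : MonotoneOn f s)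
    (ha : a ∈ interior s) (hv : 0 ≤ v) : 0 ≤ fderiv ℝ f a v := by
  by_cases hd : DifferentiableAt ℝ f a
  swap
  · simp [fderiv_zero_of_not_differentiableAt hd]
  have hmin : IsLocalMinOn f (s ∩ Ici a) a :=
    IsMinOn.localize fun x hx => hf (interior_subset ha) hx.1 hx.2
  refine hmin.hasFDerivWithinAt_nonneg hd.hasFDerivAt.hasFDerivWithinAt
    (mem_posTangentConeAt_of_frequently_mem (Eventually.frequently ?_))
  have hline : Tendsto (fun t : ℝ => a + t • v) (𝓝 0) (𝓝 a) :=
    Continuous.tendsto' (by fun_prop) 0 a (by simp)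
  filter_upwards [nhdsWithin_le_nhds (hline.eventually (isOpen_interior.mem_nhds ha)),
    self_mem_nhdsWithin] with t hts ht
  exact ⟨interior_subset hts, le_add_of_nonneg_right (smul_nonneg (le_of_lt ht) hv)⟩

theorem Convex.monotoneOn_of_fderiv_nonneg (hs : Convex ℝ s)
    (hd : ∀ a ∈ s, DifferentiableAt ℝ f a) (hf' : ∀ a ∈ s, ∀ v, 0 ≤ v → 0 ≤ fderiv ℝ f a v) :
    MonotoneOn f s := by
  intro x hx y hy hxy
  obtain ⟨z, hz, hfz⟩ := domain_mvt (fun a ha => (hd a ha).hasFDerivAt.hasFDerivWithinAt) hs hx hy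
  have := hf' z (hs.segment_subset hx hy hz) (y - x) (sub_nonneg.2 hxy)
  linarith

end OrderedNormedSpace

theorem stmt6_general (N : ℕ) (C : Set (Fin N → ℝ)) (hCc : Convex ℝ C)
    (hCi : (interior C).Nonempty)
    (Φ : (Fin N → ℝ) → ℝ) (hcont : ContinuousOn Φ C)
    (hdiff : ∀ a ∈ interior C, DifferentiableAt ℝ Φ a) :
    MonotoneOn Φ C ↔
      ∀ a ∈ interior C, ∀ i : Fin N, 0 ≤ fderiv ℝ Φ a (Pi.single i 1) := by
  constructor
  · intro hmono a ha i
    exact hmono.fderiv_nonneg ha (Pi.single_nonneg.2 zero_le_one)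
  · intro hgrad
    refine hCc.monotoneOn_of_monotoneOn_interior hCi hcont ?_
    exact hCc.interior.monotoneOn_of_fderiv_nonneg hdiff fun a ha _ hv =>
      (fderiv ℝ Φ a).toLinearMap.map_nonneg_of_map_single_nonneg (hgrad a ha) hv

/-- Amann's criterion: a convex function `Φ`, continuous on a convex set `C ⊆ ℝ^N`
(componentwise order) with nonempty interior and Gâteaux differentiable on `int C`,
is isotone on `C` iff its gradient is nonnegative (componentwise) throughout `int C`. -/
theorem stmt6 (N : ℕ) (C : Set (Fin N → ℝ)) (hCc : Convex ℝ C)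
    (hCi : (interior C).Nonempty)
    (Φ : (Fin N → ℝ) → ℝ) (hconv : ConvexOn ℝ C Φ) (hcont : ContinuousOn Φ C)
    (hdiff : ∀ a ∈ interior C, DifferentiableAt ℝ Φ a) :
    MonotoneOn Φ C ↔
      ∀ a ∈ interior C, ∀ i : Fin N, 0 ≤ fderiv ℝ Φ a (Pi.single i 1) :=
  stmt6_general N C hCc hCi Φ hcont hdiff
end

section
/- Let C be an open convex subset of ℝ^N and Φ : C → ℝ a continuous, twice Gâteaux differentiable convex function. Then the gradient map ∇Φ : C → ℝ^N is isotone with respect to the coordinatewise order if and only if all mixed second partial derivatives ∂²Φ/∂x_i∂x_j (i ≠ j) are nonnegative on C. -/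
/-!
Everything is read off one-variable restrictions. The mixed partial `∂ᵢ∂ⱼΦ(x)` is the derivative
at `0` of `t ↦ ∂ⱼΦ(x + t eᵢ)`, which is monotone when `∇Φ` is isotone. Conversely, for `u ≤ v`
the derivative of `t ↦ ∂ᵢΦ(u + t (v - u))` is `∑ⱼ (vⱼ - uⱼ) ∂ⱼ∂ᵢΦ`, a nonnegative combination of
the mixed partials and of the diagonal term `∂ᵢ∂ᵢΦ`, which is nonnegative because the derivative
of a convex function of one variable is monotone.
-/

open Set Filter Topology

section Line

variable {E F : Type*} [NormedAddCommGroup E] [NormedSpace ℝ E]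
  [NormedAddCommGroup F] [NormedSpace ℝ F]

theorem HasFDerivAt.comp_add_smul {f : E → F} {f' : E →L[ℝ] F} {x w : E} {t : ℝ}
    (hf : HasFDerivAt f f' (x + t • w)) :
    HasDerivAt (fun s : ℝ => f (x + s • w)) (f' w) t := by
  have hline : HasDerivAt (fun s : ℝ => x + s • w) w t := by
    simpa using ((hasDerivAt_id t).smul_const w).const_add x
  exact hf.comp_hasDerivAt t hline

theorem IsOpen.preimage_add_smul_mem_nhds {C : Set E} (hC : IsOpen C) {x : E} (hx : x ∈ C)
    (w : E) : {t : ℝ | x + t • w ∈ C} ∈ 𝓝 (0 : ℝ) :=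
  (hC.preimage (by fun_prop)).mem_nhds (by simpa using hx)

theorem ConvexOn.comp_add_smul {C : Set E} {f : E → ℝ} (hf : ConvexOn ℝ C f) (x w : E) :
    ConvexOn ℝ {t : ℝ | x + t • w ∈ C} (fun t => f (x + t • w)) := by
  have hline : ∀ t : ℝ, AffineMap.lineMap x (x + w) t = x + t • w := fun t => by
    rw [AffineMap.lineMap_apply_module', add_sub_cancel_left, add_comm]
  simpa only [Function.comp_def, preimage, hline] using
    hf.comp_affineMap (AffineMap.lineMap x (x + w))

theorem HasFDerivAt.clm_apply_const {G : Type*} [NormedAddCommGroup G] [NormedSpace ℝ G]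
    {c : E → F →L[ℝ] G} {c' : E →L[ℝ] F →L[ℝ] G} {x : E} (hc : HasFDerivAt c c' x) (v : F) :
    HasFDerivAt (fun y => c y v) (c'.flip v) x := by
  simpa using hc.clm_apply (hasFDerivAt_const v x)

theorem HasFDerivAt.nonneg_of_monotoneOn_line {f : E → ℝ} {f' : E →L[ℝ] ℝ} {x w : E}
    {s : Set ℝ} (hf : HasFDerivAt f f' x) (hs : s ∈ 𝓝 (0 : ℝ))
    (hmono : MonotoneOn (fun t : ℝ => f (x + t • w)) s) : 0 ≤ f' w := by
  have hd : HasDerivAt (fun t : ℝ => f (x + t • w)) (f' w) 0 :=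
    HasFDerivAt.comp_add_smul (by simpa using hf)
  exact hd.hasDerivWithinAt.nonneg_of_monotoneOn
    (accPt_iff_frequently_nhdsNE.2 (Eventually.frequently (mem_nhdsWithin_of_mem_nhds hs))) hmono

theorem ConvexOn.second_deriv_apply_self_nonneg {C : Set E} (hC : IsOpen C) {f : E → ℝ}
    (hf : ConvexOn ℝ C f) {f' : E → E →L[ℝ] ℝ} {f'' : E →L[ℝ] E →L[ℝ] ℝ}
    (hf' : ∀ x ∈ C, HasFDerivAt f (f' x) x) {x : E} (hx : x ∈ C) (hf'' : HasFDerivAt f' f'' x)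
    (w : E) : 0 ≤ f'' w w := by
  have hslope : ∀ t ∈ {t : ℝ | x + t • w ∈ C},
      HasDerivAt (fun t : ℝ => f (x + t • w)) (f' (x + t • w) w) t :=
    fun t ht => (hf' _ ht).comp_add_smul
  have hmono := (hf.comp_add_smul x w).monotoneOn_deriv fun t ht => (hslope t ht).differentiableAt
  refine (hf''.clm_apply_const w).nonneg_of_monotoneOn_line (hC.preimage_add_smul_mem_nhds hx w) ?_
  intro t ht u hu htu
  simpa only [(hslope t ht).deriv, (hslope u hu).deriv] using hmono ht hu htu

end Line

theorem ContinuousLinearMap.nonneg_of_nonneg_single {ι : Type*} [Fintype ι] [DecidableEq ι]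
    (L : (ι → ℝ) →L[ℝ] ℝ) (hL : ∀ j, 0 ≤ L (Pi.single j 1)) {w : ι → ℝ} (hw : 0 ≤ w) :
    0 ≤ L w := by
  rw [← Finset.univ_sum_single w, map_sum]
  refine Finset.sum_nonneg fun j _ => ?_
  have hsingle : Pi.single j (w j) = w j • (Pi.single j 1 : ι → ℝ) := by
    rw [← Pi.single_smul', smul_eq_mul, mul_one]
  rw [hsingle, map_smul]
  exact smul_nonneg (hw j) (hL j)

section Gradient

variable {ι : Type*} [Fintype ι] [DecidableEq ι] {C : Set (ι → ℝ)} {G : (ι → ℝ) → (ι → ℝ) →L[ℝ] ℝ}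
  {G'' : (ι → ℝ) → (ι → ℝ) →L[ℝ] (ι → ℝ) →L[ℝ] ℝ}

theorem hessian_nonneg_of_isotone (hC : IsOpen C)
    (hG : ∀ u ∈ C, ∀ v ∈ C, u ≤ v → ∀ i, G u (Pi.single i 1) ≤ G v (Pi.single i 1))
    {x : ι → ℝ} (hx : x ∈ C) (hG'' : HasFDerivAt G (G'' x) x) (i j : ι) :
    0 ≤ G'' x (Pi.single i 1) (Pi.single j 1) := by
  refine (hG''.clm_apply_const (Pi.single j 1)).nonneg_of_monotoneOn_line
    (hC.preimage_add_smul_mem_nhds hx _) fun s hs t ht hst => hG _ hs _ ht ?_ j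
  exact add_le_add_right (smul_le_smul_of_nonneg_right hst (Pi.single_nonneg.2 zero_le_one)) x

theorem isotone_of_hessian_nonneg (hC : Convex ℝ C)
    (hG : ∀ x ∈ C, HasFDerivAt G (G'' x) x)
    (hG'' : ∀ x ∈ C, ∀ i j, 0 ≤ G'' x (Pi.single i 1) (Pi.single j 1)) :
    ∀ u ∈ C, ∀ v ∈ C, u ≤ v → ∀ i, G u (Pi.single i 1) ≤ G v (Pi.single i 1) := by
  intro u hu v hv huv i
  have hseg : ∀ t ∈ Icc (0 : ℝ) 1, u + t • (v - u) ∈ C := fun t ht => hC.add_smul_sub_mem hu hv ht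
  have hderiv : ∀ t ∈ Icc (0 : ℝ) 1, HasDerivAt (fun s : ℝ => G (u + s • (v - u)) (Pi.single i 1))
      (G'' (u + t • (v - u)) (v - u) (Pi.single i 1)) t :=
    fun t ht => ((hG _ (hseg t ht)).clm_apply_const _).comp_add_smul
  have hmono : MonotoneOn (fun s : ℝ => G (u + s • (v - u)) (Pi.single i 1)) (Icc 0 1) := by
    refine monotoneOn_of_hasDerivWithinAt_nonneg (convex_Icc 0 1)
      (fun t ht => (hderiv t ht).continuousAt.continuousWithinAt)
      (fun t ht => (hderiv t (interior_subset ht)).hasDerivWithinAt) fun t ht => ?_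
    exact ((G'' _).flip _).nonneg_of_nonneg_single
      (fun j => hG'' _ (hseg t (interior_subset ht)) j i) (sub_nonneg.2 huv)
  simpa using hmono (left_mem_Icc.2 zero_le_one) (right_mem_Icc.2 zero_le_one) zero_le_one

end Gradient

theorem stmt7_general (N : ℕ) (C : Set (Fin N → ℝ)) (hCo : IsOpen C) (hCc : Convex ℝ C)
    (Φ : (Fin N → ℝ) → ℝ) (hconv : ConvexOn ℝ C Φ)
    (Φ' : (Fin N → ℝ) → ((Fin N → ℝ) →L[ℝ] ℝ))
    (Φ'' : (Fin N → ℝ) → ((Fin N → ℝ) →L[ℝ] (Fin N → ℝ) →L[ℝ] ℝ))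
    (hd1 : ∀ x ∈ C, HasFDerivAt Φ (Φ' x) x)
    (hd2 : ∀ x ∈ C, HasFDerivAt Φ' (Φ'' x) x) :
    (∀ u ∈ C, ∀ v ∈ C, u ≤ v →
        ∀ i : Fin N, Φ' u (Pi.single i 1) ≤ Φ' v (Pi.single i 1)) ↔
      (∀ x ∈ C, ∀ i j : Fin N, i ≠ j →
        0 ≤ Φ'' x (Pi.single i 1) (Pi.single j 1)) := by
  refine ⟨fun hiso x hx i j _ => hessian_nonneg_of_isotone hCo hiso hx (hd2 x hx) i j,
    fun hmixed => isotone_of_hessian_nonneg hCc hd2 fun x hx i j => ?_⟩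
  rcases eq_or_ne i j with rfl | hij
  · exact hconv.second_deriv_apply_self_nonneg hCo hd1 hx (hd2 x hx) _
  · exact hmixed x hx i j hij

/-- For a continuous, twice Gâteaux differentiable convex function `Φ` on an open convex
`C ⊆ ℝ^N`, the gradient map is isotone (for the componentwise order) iff all mixed
second partial derivatives `∂²Φ/∂x_i∂x_j` (i ≠ j) are nonnegative on `C`. -/
theorem stmt7 (N : ℕ) (C : Set (Fin N → ℝ)) (hCo : IsOpen C) (hCc : Convex ℝ C)
    (Φ : (Fin N → ℝ) → ℝ) (hcont : ContinuousOn Φ C) (hconv : ConvexOn ℝ C Φ)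
    (Φ' : (Fin N → ℝ) → ((Fin N → ℝ) →L[ℝ] ℝ))
    (Φ'' : (Fin N → ℝ) → ((Fin N → ℝ) →L[ℝ] (Fin N → ℝ) →L[ℝ] ℝ))
    (hd1 : ∀ x ∈ C, HasFDerivAt Φ (Φ' x) x)
    (hd2 : ∀ x ∈ C, HasFDerivAt Φ' (Φ'' x) x) :
    (∀ u ∈ C, ∀ v ∈ C, u ≤ v →
        ∀ i : Fin N, Φ' u (Pi.single i 1) ≤ Φ' v (Pi.single i 1)) ↔
      (∀ x ∈ C, ∀ i j : Fin N, i ≠ j →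
        0 ≤ Φ'' x (Pi.single i 1) (Pi.single j 1)) :=
  stmt7_general N C hCo hCc Φ hconv Φ' Φ'' hd1 hd2
end

section
/- Let C be an open box in ℝ^N (N ≥ 2) and Φ : C → ℝ a continuously differentiable convex function. Then the gradient of Φ is isotone on C if and only if Φ is 2-box monotone, i.e., for every nondegenerate 2-dimensional coordinate-parallel box B contained in C, the second-order increment Δ(Φ; B) = Φ(…,v_i,…,v_j,…) − Φ(…,v_i,…,w_j,…) − Φ(…,w_i,…,v_j,…) + Φ(…,w_i,…,w_j,…) is nonnegative. -/
/-!
On two parallel coordinate lines `t ↦ update z j t`, the difference of `Φ` has derivative equal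
to the difference of the `j`-th partial derivatives, so isotone partials give nonnegative 2-box
increments. Conversely, to compare `∂ₖΦ` at `x ≤ y`, move from `x` to `y` one coordinate at a
time. Moving coordinate `k` itself is controlled by convexity, since the derivative of a convex
function of one variable is monotone. Moving another coordinate `m` is controlled by the 2-box
increment on `[x k, x k + h] × [x m, y m]`: divided by `h`, it compares difference quotients of
`Φ` in direction `k` at the two points, and `h → 0⁺` compares the partials.
-/

open Set Filter Topology Function

theorem HasDerivAt.le_of_eventually_sub_le {f g : ℝ → ℝ} {f' g' a : ℝ} (hf : HasDerivAt f f' a)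
    (hg : HasDerivAt g g' a) (h : ∀ᶠ t in 𝓝[>] a, f t - f a ≤ g t - g a) : f' ≤ g' := by
  refine le_of_tendsto_of_tendsto ((hasDerivAt_iff_tendsto_slope.mp hf).mono_left
    (nhdsGT_le_nhdsNE a)) ((hasDerivAt_iff_tendsto_slope.mp hg).mono_left (nhdsGT_le_nhdsNE a)) ?_
  filter_upwards [h, self_mem_nhdsWithin] with t ht (hat : a < t)
  simp only [slope_def_field]
  exact div_le_div_of_nonneg_right ht (sub_pos.2 hat).le

theorem sub_le_sub_of_hasDerivAt_le {f g f' g' : ℝ → ℝ} {p q : ℝ} (hpq : p ≤ q)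
    (hf : ∀ t ∈ Icc p q, HasDerivAt f (f' t) t) (hg : ∀ t ∈ Icc p q, HasDerivAt g (g' t) t)
    (hle : ∀ t ∈ Icc p q, f' t ≤ g' t) : f q - f p ≤ g q - g p := by
  have hd : ∀ t ∈ Icc p q, HasDerivAt (fun t => g t - f t) (g' t - f' t) t :=
    fun t ht => (hg t ht).sub (hf t ht)
  have hmono : MonotoneOn (fun t => g t - f t) (Icc p q) :=
    monotoneOn_of_hasDerivWithinAt_nonneg (convex_Icc p q)
      (fun t ht => (hd t ht).continuousAt.continuousWithinAt)
      (fun t ht => (hd t (interior_subset ht)).hasDerivWithinAt)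
      (fun t ht => sub_nonneg.2 (hle t (interior_subset ht)))
  linarith [hmono (left_mem_Icc.2 hpq) (right_mem_Icc.2 hpq) hpq]

section Update

variable {ι : Type*} [DecidableEq ι]

theorem monotoneOn_univ_pi_of_update [Fintype ι] {α β : Type*} [Preorder α] [Preorder β]
    {s : ι → Set α} {F : (ι → α) → β}
    (hF : ∀ x ∈ univ.pi s, ∀ i, ∀ t ∈ s i, x i ≤ t → F x ≤ F (update x i t)) :
    MonotoneOn F (univ.pi s) := by
  intro u hu v hv huv
  have key : ∀ S : Finset ι, F u ≤ F (S.piecewise v u) := by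
    intro S
    induction S using Finset.induction_on with
    | empty => simp
    | insert i S hi ih =>
      rw [Finset.piecewise_insert]
      refine ih.trans (hF _ (S.piecewise_mem_set_pi hv hu) i (v i) (hv i trivial) ?_)
      rw [Finset.piecewise_eq_of_notMem _ _ _ hi]
      exact huv i
  simpa using key Finset.univ

theorem IsOpen.eventually_update_mem {π : ι → Type*} [∀ i, TopologicalSpace (π i)]
    {C : Set (∀ i, π i)} (hC : IsOpen C) {x : ∀ i, π i} (hx : x ∈ C) (k : ι) :
    ∀ᶠ r in 𝓝 (x k), update x k r ∈ C := by
  have : ContinuousAt (update x k) (x k) := (continuous_const.update k continuous_id).continuousAt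
  exact this.preimage_mem_nhds (by rwa [update_eq_self, hC.mem_nhds_iff])

theorem DifferentiableAt.hasDerivAt_comp_update [Fintype ι] {𝕜 F : Type*}
    [NontriviallyNormedField 𝕜] [NormedAddCommGroup F] [NormedSpace 𝕜 F]
    {Φ : (ι → 𝕜) → F} {x : ι → 𝕜} {k : ι} {t : 𝕜}
    (hΦ : DifferentiableAt 𝕜 Φ (update x k t)) :
    HasDerivAt (fun s => Φ (update x k s)) (fderiv 𝕜 Φ (update x k t) (Pi.single k 1)) t :=
  hΦ.hasFDerivAt.comp_hasDerivAt t (hasDerivAt_update x k t)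

theorem ConvexOn.comp_update {𝕜 β : Type*} [Semiring 𝕜] [PartialOrder 𝕜]
    [AddCommMonoid β] [PartialOrder β] [SMul 𝕜 β] {C : Set (ι → 𝕜)} {Φ : (ι → 𝕜) → β}
    (hΦ : ConvexOn 𝕜 C Φ) (x : ι → 𝕜) (k : ι) :
    ConvexOn 𝕜 {t | update x k t ∈ C} (fun t => Φ (update x k t)) := by
  have h := (hΦ.translate_right (update x k 0)).comp_linearMap
    (LinearMap.single 𝕜 (fun _ => 𝕜) k)
  have hu : ∀ t, update x k 0 + Pi.single k t = update x k t := by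
    intro t; ext i; by_cases hi : i = k <;> simp [hi]
  convert h using 1 <;> ext t <;> simp only [mem_ofPred_eq, mem_preimage, comp_apply,
    LinearMap.coe_single, hu]

end Update

def TwoBoxMonotoneOn {ι : Type*} [DecidableEq ι] (Φ : (ι → ℝ) → ℝ) (C : Set (ι → ℝ)) : Prop :=
  ∀ (u : ι → ℝ) (i j : ι), i ≠ j →
    ∀ vi wi vj wj : ℝ, vi < wi → vj < wj →
    update (update u i vi) j vj ∈ C →
    update (update u i vi) j wj ∈ C →
    update (update u i wi) j vj ∈ C →
    update (update u i wi) j wj ∈ C →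
    0 ≤ Φ (update (update u i vi) j vj)
        - Φ (update (update u i vi) j wj)
        - Φ (update (update u i wi) j vj)
        + Φ (update (update u i wi) j wj)

section TwoBox

variable {ι : Type*} [Fintype ι] [DecidableEq ι] {Φ : (ι → ℝ) → ℝ} {C : Set (ι → ℝ)}

theorem twoBoxMonotoneOn_of_monotoneOn_fderiv (hCo : IsOpen C) (hCc : C.OrdConnected)
    (hΦ : DifferentiableOn ℝ Φ C)
    (hmono : ∀ k, MonotoneOn (fun x => fderiv ℝ Φ x (Pi.single k 1)) C) :
    TwoBoxMonotoneOn Φ C := by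
  intro u i j hij vi wi vj wj hvwi hvwj h₁ h₂ h₃ h₄
  have hseg : ∀ z, update z j vj ∈ C → update z j wj ∈ C → ∀ t ∈ Icc vj wj, update z j t ∈ C :=
    fun z hv hw t ht => hCc.out hv hw ⟨update_le_update_iff'.2 ht.1, update_le_update_iff'.2 ht.2⟩
  have hderiv : ∀ z, update z j vj ∈ C → update z j wj ∈ C → ∀ t ∈ Icc vj wj,
      HasDerivAt (fun s => Φ (update z j s)) (fderiv ℝ Φ (update z j t) (Pi.single j 1)) t :=
    fun z hv hw t ht => ((hΦ _ (hseg z hv hw t ht)).differentiableAt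
      (hCo.mem_nhds (hseg z hv hw t ht))).hasDerivAt_comp_update
  have hle : ∀ t, update (update u i vi) j t ≤ update (update u i wi) j t := fun t =>
    update_le_update_iff.2 ⟨le_rfl, fun l _ => update_le_update_iff'.2 hvwi.le l⟩
  have := sub_le_sub_of_hasDerivAt_le hvwj.le (hderiv _ h₁ h₂) (hderiv _ h₃ h₄)
    fun t ht => hmono j (hseg _ h₁ h₂ t ht) (hseg _ h₃ h₄ t ht) (hle t)
  linarith

theorem fderiv_single_le_of_convexOn (hCo : IsOpen C) (hΦ : DifferentiableOn ℝ Φ C)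
    (hconv : ConvexOn ℝ C Φ) {x : ι → ℝ} (hx : x ∈ C) {k : ι} {t : ℝ}
    (ht : update x k t ∈ C) (hxt : x k ≤ t) :
    fderiv ℝ Φ x (Pi.single k 1) ≤ fderiv ℝ Φ (update x k t) (Pi.single k 1) := by
  have hderiv : ∀ s ∈ {s | update x k s ∈ C},
      HasDerivAt (fun s => Φ (update x k s)) (fderiv ℝ Φ (update x k s) (Pi.single k 1)) s :=
    fun s hs => ((hΦ _ hs).differentiableAt (hCo.mem_nhds hs)).hasDerivAt_comp_update
  have hxk : x k ∈ {s | update x k s ∈ C} := by rwa [mem_ofPred_eq, update_eq_self]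
  have := (hconv.comp_update x k).monotoneOn_deriv (fun s hs => (hderiv s hs).differentiableAt)
    hxk ht hxt
  rwa [(hderiv _ hxk).deriv, (hderiv _ ht).deriv, update_eq_self] at this

theorem fderiv_single_le_of_twoBoxMonotoneOn (hCo : IsOpen C) (hΦ : DifferentiableOn ℝ Φ C)
    (h2 : TwoBoxMonotoneOn Φ C) {x : ι → ℝ} (hx : x ∈ C) {k m : ι} (hkm : k ≠ m) {t : ℝ}
    (ht : update x m t ∈ C) (hxt : x m ≤ t) :
    fderiv ℝ Φ x (Pi.single k 1) ≤ fderiv ℝ Φ (update x m t) (Pi.single k 1) := by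
  rcases hxt.eq_or_lt with rfl | hlt
  · rw [update_eq_self]
  set y := update x m t
  have hyk : y k = x k := update_of_ne hkm _ _
  have hderiv : ∀ z ∈ C, HasDerivAt (fun s => Φ (update z k s))
      (fderiv ℝ Φ z (Pi.single k 1)) (z k) := fun z hz => by
    have hd : DifferentiableAt ℝ Φ (update z k (z k)) := by
      rw [update_eq_self]; exact (hΦ z hz).differentiableAt (hCo.mem_nhds hz)
    simpa only [update_eq_self] using hd.hasDerivAt_comp_update
  have hy := hderiv y ht
  rw [hyk] at hy
  refine (hderiv x hx).le_of_eventually_sub_le hy ?_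
  filter_upwards [self_mem_nhdsWithin, nhdsWithin_le_nhds (hCo.eventually_update_mem hx k),
    nhdsWithin_le_nhds (hyk ▸ hCo.eventually_update_mem ht k)] with r (hr : x k < r) hxr hyr
  have e₁ : update (update x k r) m (x m) = update x k r :=
    update_eq_self_iff.2 (update_of_ne hkm.symm r x).symm
  have e₂ : update (update x k r) m t = update y k r := update_comm hkm r t x
  have hbox := h2 x k m hkm (x k) r (x m) t hr hlt (by simpa using hx) (by simpa using ht)
    (by rwa [e₁]) (by rwa [e₂])
  simp only [update_eq_self, e₁, e₂] at hbox
  rw [update_eq_self, ← hyk, update_eq_self]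
  linarith

theorem monotoneOn_fderiv_of_twoBoxMonotoneOn {s : ι → Set ℝ} (hs : ∀ k, IsOpen (s k))
    (hΦ : DifferentiableOn ℝ Φ (univ.pi s)) (hconv : ConvexOn ℝ (univ.pi s) Φ)
    (h2 : TwoBoxMonotoneOn Φ (univ.pi s)) (k : ι) :
    MonotoneOn (fun x => fderiv ℝ Φ x (Pi.single k 1)) (univ.pi s) := by
  have hCo : IsOpen (univ.pi s) := isOpen_set_pi finite_univ fun k _ => hs k
  refine monotoneOn_univ_pi_of_update fun x hx m t ht hxt => ?_
  have hxt' : update x m t ∈ univ.pi s := (update_mem_pi_iff_of_mem hx).2 fun _ => ht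
  rcases eq_or_ne k m with rfl | hkm
  · exact fderiv_single_le_of_convexOn hCo hΦ hconv hx hxt' hxt
  · exact fderiv_single_le_of_twoBoxMonotoneOn hCo hΦ h2 hx hkm hxt' hxt

end TwoBox

theorem stmt8_general (N : ℕ) (a b : Fin N → ℝ) (C : Set (Fin N → ℝ))
    (hC : C = {x | ∀ k, x k ∈ Set.Ioo (a k) (b k)})
    (Φ : (Fin N → ℝ) → ℝ) (hΦ : ContDiffOn ℝ 1 Φ C) (hconv : ConvexOn ℝ C Φ) :
    (∀ u ∈ C, ∀ v ∈ C, u ≤ v →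
        ∀ k : Fin N, fderiv ℝ Φ u (Pi.single k 1) ≤ fderiv ℝ Φ v (Pi.single k 1)) ↔
      (∀ (u : Fin N → ℝ) (i j : Fin N), i ≠ j →
        ∀ vi wi vj wj : ℝ, vi < wi → vj < wj →
        Function.update (Function.update u i vi) j vj ∈ C →
        Function.update (Function.update u i vi) j wj ∈ C →
        Function.update (Function.update u i wi) j vj ∈ C →
        Function.update (Function.update u i wi) j wj ∈ C →
        0 ≤ Φ (Function.update (Function.update u i vi) j vj)
            - Φ (Function.update (Function.update u i vi) j wj)
            - Φ (Function.update (Function.update u i wi) j vj)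
            + Φ (Function.update (Function.update u i wi) j wj)) := by
  have hbox : C = univ.pi fun k => Ioo (a k) (b k) := by
    rw [hC]; ext x; simp
  subst hbox
  have hd := hΦ.differentiableOn one_ne_zero
  have hCo : IsOpen (univ.pi fun k => Ioo (a k) (b k)) :=
    isOpen_set_pi finite_univ fun k _ => isOpen_Ioo
  constructor
  · exact fun hmono => twoBoxMonotoneOn_of_monotoneOn_fderiv hCo inferInstance hd
      fun k u hu v hv huv => hmono u hu v hv huv k
  · exact fun h2 u hu v hv huv k =>
      monotoneOn_fderiv_of_twoBoxMonotoneOn (fun _ => isOpen_Ioo) hd hconv h2 k hu hv huv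

/-- On an open box `C ⊆ ℝ^N` (N ≥ 2), the gradient of a continuously differentiable convex
function `Φ` is isotone iff `Φ` is 2-box monotone (nonnegative second-order increments over
every nondegenerate axis-parallel 2-dimensional box contained in `C`). -/
theorem stmt8 (N : ℕ) (hN : 2 ≤ N) (a b : Fin N → ℝ) (C : Set (Fin N → ℝ))
    (hC : C = {x | ∀ k, x k ∈ Set.Ioo (a k) (b k)})
    (Φ : (Fin N → ℝ) → ℝ) (hΦ : ContDiffOn ℝ 1 Φ C) (hconv : ConvexOn ℝ C Φ) :
    (∀ u ∈ C, ∀ v ∈ C, u ≤ v →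
        ∀ k : Fin N, fderiv ℝ Φ u (Pi.single k 1) ≤ fderiv ℝ Φ v (Pi.single k 1)) ↔
      (∀ (u : Fin N → ℝ) (i j : Fin N), i ≠ j →
        ∀ vi wi vj wj : ℝ, vi < wi → vj < wj →
        Function.update (Function.update u i vi) j vj ∈ C →
        Function.update (Function.update u i vi) j wj ∈ C →
        Function.update (Function.update u i wi) j vj ∈ C →
        Function.update (Function.update u i wi) j wj ∈ C →
        0 ≤ Φ (Function.update (Function.update u i vi) j vj)
            - Φ (Function.update (Function.update u i vi) j wj)
            - Φ (Function.update (Function.update u i wi) j vj)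
            + Φ (Function.update (Function.update u i wi) j wj)) :=
  stmt8_general N a b C hC Φ hΦ hconv
end

section
/- The log-sum-exp function LSE(x) = log(∑_{k=1}^N e^{x_k}) on ℝ^N (N ≥ 2) is not 2-box monotone: its increment over the box [0,1]×[0,1]×{0}×⋯×{0} equals log N − 2 log(e + N − 1) + log(2e + N − 2), which is negative. -/
/-- The log-sum-exp function on `ℝ^N` (N ≥ 2) is not 2-box monotone: its increment over
the box `[0,1]×[0,1]×{0}×⋯×{0}` equals `log N - 2 log(e+N-1) + log(2e+N-2)`, which is
negative. -/
theorem stmt11 (N : ℕ) (hN : 2 ≤ N) (LSE : (Fin N → ℝ) → ℝ)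
    (hLSE : LSE = fun x => Real.log (∑ k, Real.exp (x k))) :
    LSE 0 - LSE (Pi.single ⟨1, by omega⟩ 1) - LSE (Pi.single ⟨0, by omega⟩ 1)
        + LSE (Pi.single ⟨0, by omega⟩ 1 + Pi.single ⟨1, by omega⟩ 1) =
      Real.log N - 2 * Real.log (Real.exp 1 + N - 1) + Real.log (2 * Real.exp 1 + N - 2) ∧
    Real.log N - 2 * Real.log (Real.exp 1 + N - 1) + Real.log (2 * Real.exp 1 + N - 2) < 0 := by
  have he : (2.7182818283 : ℝ) < Real.exp 1 := Real.exp_one_gt_d9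
  have hN1 : (2:ℝ) ≤ (N:ℝ) := by exact_mod_cast hN
  set i0 : Fin N := ⟨0, by omega⟩
  set i1 : Fin N := ⟨1, by omega⟩
  have hne : i0 ≠ i1 := by simp [i0, i1, Fin.ext_iff]
  have key : ∀ i : Fin N, (∑ k, Real.exp ((Pi.single i 1 : Fin N → ℝ) k)) = Real.exp 1 + (N:ℝ) - 1 := by
    intro i
    have h : ∀ k, Real.exp ((Pi.single i 1 : Fin N → ℝ) k)
        = (if k = i then Real.exp 1 - 1 else 0) + 1 := by
      intro k; rcases eq_or_ne k i with h | h <;> simp [h, Pi.single_apply]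
    simp_rw [h, Finset.sum_add_distrib, Finset.sum_ite_eq', Finset.sum_const]
    simp
    ring
  have key2 : (∑ k, Real.exp (((Pi.single i0 1 : Fin N → ℝ) + (Pi.single i1 1 : Fin N → ℝ)) k))
      = 2 * Real.exp 1 + (N:ℝ) - 2 := by
    have h : ∀ k, Real.exp (((Pi.single i0 1 : Fin N → ℝ) + (Pi.single i1 1 : Fin N → ℝ)) k)
        = (if k = i0 then Real.exp 1 - 1 else 0) + (if k = i1 then Real.exp 1 - 1 else 0) + 1 := by
      intro k
      rcases eq_or_ne k i0 with h0 | h0 <;> rcases eq_or_ne k i1 with h1 | h1 <;>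
        simp_all [Pi.single_apply, Pi.add_apply]
    simp_rw [h, Finset.sum_add_distrib, Finset.sum_ite_eq', Finset.sum_const]
    simp
    ring
  have hsum0 : (∑ k : Fin N, Real.exp ((0 : Fin N → ℝ) k)) = (N:ℝ) := by simp
  have heq : LSE 0 - LSE (Pi.single i1 1) - LSE (Pi.single i0 1)
        + LSE (Pi.single i0 1 + Pi.single i1 1) =
      Real.log N - 2 * Real.log (Real.exp 1 + N - 1) + Real.log (2 * Real.exp 1 + N - 2) := by
    rw [hLSE]
    simp only
    rw [hsum0, key, key, key2]
    ring
  refine ⟨heq, ?_⟩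
  have hpos1 : (0:ℝ) < (N:ℝ) := by linarith
  have hpos2 : (0:ℝ) < Real.exp 1 + (N:ℝ) - 1 := by linarith
  have hpos3 : (0:ℝ) < 2 * Real.exp 1 + (N:ℝ) - 2 := by linarith
  have hlt : (N:ℝ) * (2 * Real.exp 1 + (N:ℝ) - 2) < (Real.exp 1 + (N:ℝ) - 1) ^ 2 := by
    nlinarith [sq_nonneg (Real.exp 1 - 1)]
  have := Real.log_lt_log (by positivity) hlt
  rw [Real.log_mul (ne_of_gt hpos1) (ne_of_gt hpos3), Real.log_pow] at this
  push_cast at this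
  linarith
end

section
/- Let C ⊆ ℝ^N be open and convex, λ₁,…,λ_m ∈ (0,1] with ∑λ_k = 1, and points x₁ ≥ x₂ ≥ ⋯ ≥ x_m and y₁,…,y_m in C (componentwise order) satisfying ∑_{k=1}^n λ_k x_k ≤ ∑_{k=1}^n λ_k y_k for all n < m and ∑_{k=1}^m λ_k x_k = ∑_{k=1}^m λ_k y_k. If Φ : C → ℝ is Gâteaux differentiable, convex, and its gradient is isotone, then ∑_{k=1}^m λ_k Φ(y_k) ≥ ∑_{k=1}^m λ_k Φ(x_k). -/
/-!
Write `dₖ = λₖ (yₖ - xₖ)` with partial sums `Sₙ = ∑_{k<n} dₖ`. The gradient inequality gives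
`∑ λₖ Φ(yₖ) - ∑ λₖ Φ(xₖ) ≥ ∑ₖ ∇Φ(xₖ)(dₖ)`, and since `Sₘ = 0` Abel summation turns the
right-hand side into `∑ₖ (∇Φ(xₖ) - ∇Φ(xₖ₊₁))(Sₖ₊₁)`. Every term is nonnegative: `Sₖ₊₁ ≥ 0` by
majorization, and `∇Φ(xₖ₊₁) ≤ ∇Φ(xₖ)` on the positive cone because the `xₖ` decrease and `∇Φ`
is isotone.
-/

open Finset

theorem ConvexOn.apply_sub_le_sub_of_hasFDerivAt {E : Type*} [NormedAddCommGroup E]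
    [NormedSpace ℝ E] {C : Set E} {Φ : E → ℝ} {Φ' : E →L[ℝ] ℝ} {a b : E}
    (hΦ : ConvexOn ℝ C Φ) (ha : a ∈ C) (hb : b ∈ C) (hΦ' : HasFDerivAt Φ Φ' a) :
    Φ' (b - a) ≤ Φ b - Φ a := by
  set γ : ℝ →ᵃ[ℝ] E := AffineMap.lineMap a b
  have hγ : ∀ t : ℝ, γ t = t • (b - a) + a := fun t => AffineMap.lineMap_apply_module' a b t
  have hγ0 : γ 0 = a := by simp [hγ]
  have hγ1 : γ 1 = b := by simp [hγ]
  have hderiv : HasDerivAt (Φ ∘ γ) (Φ' (b - a)) 0 := by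
    have hγ' : HasDerivAt γ (b - a) 0 := by
      simpa [← funext hγ] using ((hasDerivAt_id (0 : ℝ)).smul_const (b - a)).add_const a
    exact (hγ0 ▸ hΦ').comp_hasDerivAt 0 hγ'
  have hslope := (hΦ.comp_affineMap γ).le_slope_of_hasDerivAt (x := 0) (y := 1)
    (by simpa [hγ0] using ha) (by simpa [hγ1] using hb) one_pos hderiv
  simpa [slope_def_field, hγ0, hγ1] using hslope

theorem ContinuousLinearMap.apply_eq_sum_mul_apply_single {ι : Type*} [Fintype ι]
    [DecidableEq ι] (L : (ι → ℝ) →L[ℝ] ℝ) (v : ι → ℝ) :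
    L v = ∑ i, v i * L (Pi.single i 1) := by
  conv_lhs => rw [← univ_sum_single v]
  refine (map_sum L _ _).trans (sum_congr rfl fun i _ => ?_)
  rw [← smul_eq_mul, ← map_smul, ← Pi.single_smul', smul_eq_mul, mul_one]

theorem ContinuousLinearMap.apply_le_apply_of_apply_single_le {ι : Type*} [Fintype ι]
    [DecidableEq ι] {L₁ L₂ : (ι → ℝ) →L[ℝ] ℝ}
    (h : ∀ i, L₁ (Pi.single i 1) ≤ L₂ (Pi.single i 1)) {v : ι → ℝ} (hv : 0 ≤ v) :
    L₁ v ≤ L₂ v := by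
  rw [L₁.apply_eq_sum_mul_apply_single, L₂.apply_eq_sum_mul_apply_single]
  gcongr with i
  exacts [hv i, h i]

section AbelSummation

variable {E β F : Type*} [AddCommGroup E] [AddCommGroup β] [FunLike F E β]
  [AddMonoidHomClass F E β]

theorem Finset.sum_range_succ_apply_eq_sum_sub_add (L : ℕ → F) (d : ℕ → E) (n : ℕ) :
    ∑ k ∈ range (n + 1), L k (d k) =
      ∑ k ∈ range n, (L k (∑ j ∈ range (k + 1), d j) - L (k + 1) (∑ j ∈ range (k + 1), d j)) +
        L n (∑ j ∈ range (n + 1), d j) := by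
  induction n with
  | zero => simp
  | succ n ih =>
    rw [sum_range_succ, ih, sum_range_succ (fun k =>
        L k (∑ j ∈ range (k + 1), d j) - L (k + 1) (∑ j ∈ range (k + 1), d j)),
      sum_range_succ d (n + 1), map_add]
    abel

theorem Finset.sum_range_apply_nonneg_of_partialSums [PartialOrder β] [IsOrderedAddMonoid β]
    (L : ℕ → F) (d : ℕ → E) {m : ℕ}
    (hL : ∀ k, k + 1 < m →
      L (k + 1) (∑ j ∈ range (k + 1), d j) ≤ L k (∑ j ∈ range (k + 1), d j))
    (hm : ∑ j ∈ range m, d j = 0) :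
    0 ≤ ∑ k ∈ range m, L k (d k) := by
  obtain _ | n := m
  · simp
  rw [sum_range_succ_apply_eq_sum_sub_add, hm, map_zero, add_zero]
  exact sum_nonneg fun k hk => sub_nonneg.2 (hL k (by rw [mem_range] at hk; omega))

end AbelSummation

theorem stmt12_general (N m : ℕ) (C : Set (Fin N → ℝ))
    (w : ℕ → ℝ) (hw : ∀ k < m, 0 < w k ∧ w k ≤ 1)
    (x y : ℕ → Fin N → ℝ) (hxC : ∀ k < m, x k ∈ C) (hyC : ∀ k < m, y k ∈ C)
    (hdec : ∀ i j, i ≤ j → j < m → x j ≤ x i)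
    (hmaj : ∀ n < m, ∑ k ∈ Finset.range n, w k • x k ≤ ∑ k ∈ Finset.range n, w k • y k)
    (heq : ∑ k ∈ Finset.range m, w k • x k = ∑ k ∈ Finset.range m, w k • y k)
    (Φ : (Fin N → ℝ) → ℝ)
    (hdiff : ∀ z ∈ C, DifferentiableAt ℝ Φ z) (hconv : ConvexOn ℝ C Φ)
    (hgrad : ∀ u ∈ C, ∀ v ∈ C, u ≤ v →
      ∀ i : Fin N, fderiv ℝ Φ u (Pi.single i 1) ≤ fderiv ℝ Φ v (Pi.single i 1)) :
    ∑ k ∈ Finset.range m, w k * Φ (x k) ≤ ∑ k ∈ Finset.range m, w k * Φ (y k) := by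
  set d : ℕ → Fin N → ℝ := fun k => w k • (y k - x k)
  have hpartial : ∀ n,
      ∑ k ∈ range n, d k = ∑ k ∈ range n, w k • y k - ∑ k ∈ range n, w k • x k := fun n => by
    simp only [d, smul_sub, sum_sub_distrib]
  have habel : 0 ≤ ∑ k ∈ range m, fderiv ℝ Φ (x k) (d k) := by
    refine sum_range_apply_nonneg_of_partialSums _ d (fun k hk => ?_)
      (by rw [hpartial, heq, sub_self])
    refine ContinuousLinearMap.apply_le_apply_of_apply_single_le
      (hgrad _ (hxC _ hk) _ (hxC k (by omega)) (hdec k (k + 1) k.le_succ hk)) ?_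
    rw [hpartial, sub_nonneg]
    exact hmaj _ hk
  have hgradient : ∀ k ∈ range m, w k * Φ (x k) + fderiv ℝ Φ (x k) (d k) ≤ w k * Φ (y k) := by
    intro k hk
    rw [mem_range] at hk
    have hk_le := mul_le_mul_of_nonneg_left (hconv.apply_sub_le_sub_of_hasFDerivAt (hxC k hk)
      (hyC k hk) (hdiff _ (hxC k hk)).hasFDerivAt) (hw k hk).1.le
    simp only [d, map_smul, smul_eq_mul]
    linarith
  have hsum := sum_le_sum hgradient
  rw [sum_add_distrib] at hsum
  linarith

/-- Extension of the Hardy–Littlewood–Pólya majorization inequality (L↓-case) to `ℝ^N`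
with the componentwise order: under L↓-majorization, `∑ λₖ Φ(yₖ) ≥ ∑ λₖ Φ(xₖ)` for every
Gâteaux differentiable convex `Φ` with isotone gradient. -/
theorem stmt12 (N m : ℕ) (C : Set (Fin N → ℝ)) (hCo : IsOpen C) (hCc : Convex ℝ C)
    (w : ℕ → ℝ) (hw : ∀ k < m, 0 < w k ∧ w k ≤ 1)
    (hw1 : ∑ k ∈ Finset.range m, w k = 1)
    (x y : ℕ → Fin N → ℝ) (hxC : ∀ k < m, x k ∈ C) (hyC : ∀ k < m, y k ∈ C)
    (hdec : ∀ i j, i ≤ j → j < m → x j ≤ x i)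
    (hmaj : ∀ n < m, ∑ k ∈ Finset.range n, w k • x k ≤ ∑ k ∈ Finset.range n, w k • y k)
    (heq : ∑ k ∈ Finset.range m, w k • x k = ∑ k ∈ Finset.range m, w k • y k)
    (Φ : (Fin N → ℝ) → ℝ)
    (hdiff : ∀ z ∈ C, DifferentiableAt ℝ Φ z) (hconv : ConvexOn ℝ C Φ)
    (hgrad : ∀ u ∈ C, ∀ v ∈ C, u ≤ v →
      ∀ i : Fin N, fderiv ℝ Φ u (Pi.single i 1) ≤ fderiv ℝ Φ v (Pi.single i 1)) :
    ∑ k ∈ Finset.range m, w k * Φ (x k) ≤ ∑ k ∈ Finset.range m, w k * Φ (y k) :=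
  stmt12_general N m C w hw x y hxC hyC hdec hmaj heq Φ hdiff hconv hgrad
end

section
/- Let C ⊆ ℝ^N be open and convex, λ₁,…,λ_m ∈ (0,1] with ∑λ_k = 1, points x₁ ≥ ⋯ ≥ x_m in C and y₁,…,y_m in C with ∑_{k=1}^n λ_k x_k ≤ ∑_{k=1}^n λ_k y_k for all n = 1,…,m (weak L↓-majorization). If Φ : C → ℝ is Gâteaux differentiable, convex, isotone, and has isotone gradient, then ∑_{k=1}^n λ_k Φ(y_k) ≥ ∑_{k=1}^n λ_k Φ(x_k) for every n = 1,…,m. -/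
/-!
Write `Dₖ = Φ'(xₖ)` and `Sₙ = ∑_{k<n} λₖ (yₖ - xₖ)`, which is `≥ 0` by majorization. Convexity gives
`λₖ (Φ(yₖ) - Φ(xₖ)) ≥ Dₖ(λₖ (yₖ - xₖ))`. As the `xₖ` decrease and the gradient is isotone, the `Dₖ`
decrease on the nonnegative cone, so Abel summation bounds `∑_{k<n} Dₖ(λₖ (yₖ - xₖ))` below by
`D_{n-1}(Sₙ)`, which is `≥ 0` because `Φ` is isotone.
-/

open Filter Topology Finset AffineMap

theorem ConvexOn.fderiv_sub_le {E : Type*} [NormedAddCommGroup E] [NormedSpace ℝ E]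
    {s : Set E} {f : E → ℝ} (hf : ConvexOn ℝ s f) {a b : E} (ha : a ∈ s) (hb : b ∈ s)
    (hd : DifferentiableAt ℝ f a) :
    fderiv ℝ f a (b - a) ≤ f b - f a := by
  have hline : HasDerivAt (f ∘ (lineMap a b : ℝ → E)) (fderiv ℝ f a (b - a)) 0 := by
    have hfa : HasFDerivAt f (fderiv ℝ f a) (lineMap a b (0 : ℝ)) := by
      simpa using hd.hasFDerivAt
    exact hfa.comp_hasDerivAt 0 hasDerivAt_lineMap
  have := (hf.comp_affineMap (lineMap (k := ℝ) a b)).le_slope_of_hasDerivAt (x := 0) (y := 1)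
    (by simpa) (by simpa) zero_lt_one hline
  simpa [slope_def_field] using this

theorem MonotoneOn.fderiv_nonneg_s13 {E : Type*} [NormedAddCommGroup E] [NormedSpace ℝ E]
    [PartialOrder E] [IsOrderedAddMonoid E] [SMulPosMono ℝ E]
    {s : Set E} {f : E → ℝ} (hf : MonotoneOn f s) {a : E} (hs : s ∈ 𝓝 a)
    (hd : DifferentiableAt ℝ f a) {v : E} (hv : 0 ≤ v) :
    0 ≤ fderiv ℝ f a v := by
  have hray : HasDerivAt (fun t : ℝ => a + t • v) v 0 := by
    simpa using ((hasDerivAt_id (0 : ℝ)).smul_const v).const_add a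
  have hg : HasDerivAt (fun t : ℝ => f (a + t • v)) (fderiv ℝ f a v) 0 := by
    have hfa : HasFDerivAt f (fderiv ℝ f a) (a + (0 : ℝ) • v) := by simpa using hd.hasFDerivAt
    exact hfa.comp_hasDerivAt 0 hray
  set T := Set.Ioi (0 : ℝ) ∩ (fun t : ℝ => a + t • v) ⁻¹' s
  have hT : T ∈ 𝓝[>] (0 : ℝ) :=
    inter_mem_nhdsWithin _ (hray.continuousAt.preimage_mem_nhds (by simpa using hs))
  have hacc : AccPt (0 : ℝ) (𝓟 T) := by
    rw [accPt_principal_iff_nhdsWithin]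
    refine (nhdsGT_neBot (0 : ℝ)).mono (nhdsWithin_le_iff.2 ?_)
    exact mem_of_superset hT fun t ht => ⟨ht, ne_of_gt ht.1⟩
  refine hg.hasDerivWithinAt.nonneg_of_monotoneOn hacc fun t ht t' ht' htt' => ?_
  exact hf ht.2 ht'.2 (add_le_add_right (smul_le_smul_of_nonneg_right htt' hv) a)

theorem LinearMap.apply_le_apply_of_single_le {ι : Type*} [Fintype ι] [DecidableEq ι]
    {L L' : (ι → ℝ) →ₗ[ℝ] ℝ} (h : ∀ i, L (Pi.single i 1) ≤ L' (Pi.single i 1))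
    {v : ι → ℝ} (hv : 0 ≤ v) : L v ≤ L' v := by
  rw [L.pi_apply_eq_sum_univ, L'.pi_apply_eq_sum_univ]
  refine sum_le_sum fun i _ => smul_le_smul_of_nonneg_left ?_ (hv i)
  convert h i using 2 <;> ext j <;> simp [Pi.single_apply, eq_comm]

section AbelSummation

variable {E F G : Type*} [AddCommGroup E] [PartialOrder E]
  [AddCommGroup F] [PartialOrder F] [IsOrderedAddMonoid F] [FunLike G E F] [AddMonoidHomClass G E F]
  {m : ℕ} {L : ℕ → G} {d : ℕ → E}

theorem apply_sum_range_le_sum_apply_of_antitone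
    (hL : ∀ k, k + 1 < m → ∀ v, 0 ≤ v → L (k + 1) v ≤ L k v)
    (hd : ∀ n ≤ m, 0 ≤ ∑ k ∈ range n, d k) :
    ∀ n < m, L n (∑ k ∈ range (n + 1), d k) ≤ ∑ k ∈ range (n + 1), L k (d k)
  | 0, _ => by simp
  | n + 1, hn => calc
      L (n + 1) (∑ k ∈ range (n + 2), d k)
          = L (n + 1) (∑ k ∈ range (n + 1), d k) + L (n + 1) (d (n + 1)) := by
        rw [sum_range_succ _ (n + 1), map_add]
      _ ≤ L n (∑ k ∈ range (n + 1), d k) + L (n + 1) (d (n + 1)) := by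
        gcongr; exact hL n hn _ (hd _ hn.le)
      _ ≤ ∑ k ∈ range (n + 1), L k (d k) + L (n + 1) (d (n + 1)) := by
        gcongr; exact apply_sum_range_le_sum_apply_of_antitone hL hd n (by omega)
      _ = ∑ k ∈ range (n + 2), L k (d k) := (sum_range_succ _ (n + 1)).symm

theorem sum_apply_nonneg_of_antitone
    (hL : ∀ k, k + 1 < m → ∀ v, 0 ≤ v → L (k + 1) v ≤ L k v)
    (hL0 : ∀ k < m, ∀ v, 0 ≤ v → 0 ≤ L k v)
    (hd : ∀ n ≤ m, 0 ≤ ∑ k ∈ range n, d k) :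
    ∀ n ≤ m, 0 ≤ ∑ k ∈ range n, L k (d k)
  | 0, _ => by simp
  | n + 1, hn => (hL0 n hn _ (hd _ hn)).trans (apply_sum_range_le_sum_apply_of_antitone hL hd n hn)

end AbelSummation

theorem stmt13_general (N m : ℕ) (C : Set (Fin N → ℝ)) (hCo : IsOpen C)
    (w : ℕ → ℝ) (hw : ∀ k < m, 0 < w k ∧ w k ≤ 1)
    (x y : ℕ → Fin N → ℝ) (hxC : ∀ k < m, x k ∈ C) (hyC : ∀ k < m, y k ∈ C)
    (hdec : ∀ i j, i ≤ j → j < m → x j ≤ x i)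
    (hmaj : ∀ n ≤ m, ∑ k ∈ Finset.range n, w k • x k ≤ ∑ k ∈ Finset.range n, w k • y k)
    (Φ : (Fin N → ℝ) → ℝ)
    (hdiff : ∀ z ∈ C, DifferentiableAt ℝ Φ z) (hconv : ConvexOn ℝ C Φ)
    (hiso : MonotoneOn Φ C)
    (hgrad : ∀ u ∈ C, ∀ v ∈ C, u ≤ v →
      ∀ i : Fin N, fderiv ℝ Φ u (Pi.single i 1) ≤ fderiv ℝ Φ v (Pi.single i 1)) :
    ∀ n ≤ m, ∑ k ∈ Finset.range n, w k * Φ (x k) ≤ ∑ k ∈ Finset.range n, w k * Φ (y k) := by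
  intro n hn
  have hterm : ∀ k < m,
      fderiv ℝ Φ (x k) (w k • (y k - x k)) ≤ w k * Φ (y k) - w k * Φ (x k) := fun k hk => by
    rw [map_smul, smul_eq_mul, ← mul_sub]
    exact mul_le_mul_of_nonneg_left
      (hconv.fderiv_sub_le (hxC k hk) (hyC k hk) (hdiff _ (hxC k hk))) (hw k hk).1.le
  have hgrad_anti : ∀ k, k + 1 < m → ∀ v, 0 ≤ v →
      fderiv ℝ Φ (x (k + 1)) v ≤ fderiv ℝ Φ (x k) v := fun k hk _ hv =>
    LinearMap.apply_le_apply_of_single_le (L := (fderiv ℝ Φ (x (k + 1))).toLinearMap)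
      (hgrad _ (hxC _ hk) _ (hxC k (by omega)) (hdec k (k + 1) k.le_succ hk)) hv
  have hgrad_nonneg : ∀ k < m, ∀ v, 0 ≤ v → 0 ≤ fderiv ℝ Φ (x k) v := fun k hk _ hv =>
    hiso.fderiv_nonneg_s13 (hCo.mem_nhds (hxC k hk)) (hdiff _ (hxC k hk)) hv
  have hpartial : ∀ n ≤ m, 0 ≤ ∑ k ∈ range n, w k • (y k - x k) := fun n hn => by
    simpa only [smul_sub, sum_sub_distrib, sub_nonneg] using hmaj n hn
  rw [← sub_nonneg, ← sum_sub_distrib]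
  exact (sum_apply_nonneg_of_antitone hgrad_anti hgrad_nonneg hpartial n hn).trans
    (sum_le_sum fun k hk => hterm k ((mem_range.1 hk).trans_le hn))

/-- Weak L↓-majorization case: if in addition `Φ` is isotone, the partial-sum
inequalities `∑_{k≤n} λₖ Φ(yₖ) ≥ ∑_{k≤n} λₖ Φ(xₖ)` hold for every `n = 1,…,m`. -/
theorem stmt13 (N m : ℕ) (C : Set (Fin N → ℝ)) (hCo : IsOpen C) (hCc : Convex ℝ C)
    (w : ℕ → ℝ) (hw : ∀ k < m, 0 < w k ∧ w k ≤ 1)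
    (hw1 : ∑ k ∈ Finset.range m, w k = 1)
    (x y : ℕ → Fin N → ℝ) (hxC : ∀ k < m, x k ∈ C) (hyC : ∀ k < m, y k ∈ C)
    (hdec : ∀ i j, i ≤ j → j < m → x j ≤ x i)
    (hmaj : ∀ n ≤ m, ∑ k ∈ Finset.range n, w k • x k ≤ ∑ k ∈ Finset.range n, w k • y k)
    (Φ : (Fin N → ℝ) → ℝ)
    (hdiff : ∀ z ∈ C, DifferentiableAt ℝ Φ z) (hconv : ConvexOn ℝ C Φ)
    (hiso : MonotoneOn Φ C)
    (hgrad : ∀ u ∈ C, ∀ v ∈ C, u ≤ v →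
      ∀ i : Fin N, fderiv ℝ Φ u (Pi.single i 1) ≤ fderiv ℝ Φ v (Pi.single i 1)) :
    ∀ n ≤ m, ∑ k ∈ Finset.range n, w k * Φ (x k) ≤ ∑ k ∈ Finset.range n, w k * Φ (y k) :=
  stmt13_general N m C hCo w hw x y hxC hyC hdec hmaj Φ hdiff hconv hiso hgrad
end

section
/- Let C ⊆ ℝ^N be open and convex and Φ : C → ℝ a differentiable convex function with isotone gradient. If x₁, x₂, y₁, y₂ ∈ C and λ ∈ (0,1) satisfy y₂ ≤ x₂ ≤ (1−λ)y₁ + λy₂ ≤ x₁ ≤ y₁, then 0 ≤ (1−λ)Φ(x₁) + λΦ(x₂) − Φ((1−λ)x₁ + λx₂) ≤ (1−λ)Φ(y₁) + λΦ(y₂) − Φ((1−λ)y₁ + λy₂). -/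
/-!
Write `G(a, b) = (1-λ) Φ a + λ Φ b - Φ ((1-λ) a + λ b)`. Moving `a` up from `x₁` to `y₁` (with
`b = x₂` fixed) and then `b` down from `x₂` to `y₂` (with `a = y₁` fixed), the derivative of `G`
along the path is a positive multiple of `∇Φ(p) · d - ∇Φ(m) · d`, where `p` is the moving point, `m`
the current convex combination and `d` the direction of motion. Throughout, `b ≤ a`, so `m` lies
between `b` and `a`; hence `m ≤ p` when `d ≥ 0` and `p ≤ m` when `d ≤ 0`, and in both cases the
isotone gradient makes that derivative nonnegative.
-/

open Set

theorem ContinuousLinearMap.apply_le_apply_of_nonneg {ι : Type*} [Fintype ι] [DecidableEq ι]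
    {f g : (ι → ℝ) →L[ℝ] ℝ} (h : ∀ i, f (Pi.single i 1) ≤ g (Pi.single i 1))
    {d : ι → ℝ} (hd : 0 ≤ d) : f d ≤ g d := by
  rw [← (Pi.basisFun ℝ ι).sum_repr d, map_sum, map_sum]
  gcongr with i
  simp only [Pi.basisFun_repr, Pi.basisFun_apply, map_smul, smul_eq_mul]
  exact mul_le_mul_of_nonneg_left (h i) (hd i)

section JensenGap

variable {E : Type*} [NormedAddCommGroup E] [NormedSpace ℝ E]

def jensenGap (Φ : E → ℝ) (α β : ℝ) (a b : E) : ℝ :=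
  α * Φ a + β * Φ b - Φ (α • a + β • b)

theorem jensenGap_comm (Φ : E → ℝ) (α β : ℝ) (a b : E) :
    jensenGap Φ α β a b = jensenGap Φ β α b a := by
  simp only [jensenGap, add_comm]

theorem ConvexOn.jensenGap_nonneg {C : Set E} {Φ : E → ℝ} (hΦ : ConvexOn ℝ C Φ)
    {α β : ℝ} (hα : 0 ≤ α) (hβ : 0 ≤ β) (hαβ : α + β = 1) {a b : E} (ha : a ∈ C) (hb : b ∈ C) :
    0 ≤ jensenGap Φ α β a b := by
  have := hΦ.2 ha hb hα hβ hαβ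
  simp only [smul_eq_mul] at this
  simp only [jensenGap]
  linarith

theorem jensenGap_le_of_fderiv_le {C : Set E} (hC : Convex ℝ C) {Φ : E → ℝ}
    (hΦ : ∀ x ∈ C, DifferentiableAt ℝ Φ x) {α β : ℝ} (hα : 0 ≤ α) (hβ : 0 ≤ β) (hαβ : α + β = 1)
    {p q z : E} (hp : p ∈ C) (hq : q ∈ C) (hz : z ∈ C)
    (h : ∀ a ∈ segment ℝ p q, fderiv ℝ Φ (α • a + β • z) (q - p) ≤ fderiv ℝ Φ a (q - p)) :
    jensenGap Φ α β p z ≤ jensenGap Φ α β q z := by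
  set b : ℝ → E := fun t => AffineMap.lineMap p q t
  have hb_mem : ∀ t ∈ Icc (0 : ℝ) 1, b t ∈ segment ℝ p q := fun t ht =>
    segment_eq_image_lineMap ℝ p q ▸ mem_image_of_mem _ ht
  have hbC : ∀ t ∈ Icc (0 : ℝ) 1, b t ∈ C := fun t ht => hC.segment_subset hp hq (hb_mem t ht)
  set g : ℝ → ℝ := fun t => α * Φ (b t) - Φ (α • b t + β • z)
  set g' : ℝ → ℝ := fun t =>
    α * fderiv ℝ Φ (b t) (q - p) - α * fderiv ℝ Φ (α • b t + β • z) (q - p)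
  have hg : ∀ t ∈ Icc (0 : ℝ) 1, HasDerivAt g (g' t) t := by
    intro t ht
    have hb : HasDerivAt b (q - p) t := AffineMap.hasDerivAt_lineMap
    have hΦb := (hΦ _ (hbC t ht)).hasFDerivAt.comp_hasDerivAt t hb
    have hΦm := (hΦ _ (hC (hbC t ht) hz hα hβ hαβ)).hasFDerivAt.comp_hasDerivAt t
      ((hb.const_smul α).add_const (β • z))
    rw [map_smul, smul_eq_mul] at hΦm
    exact (hΦb.const_mul α).sub hΦm
  have hg_mono : MonotoneOn g (Icc 0 1) := by
    refine monotoneOn_of_hasDerivWithinAt_nonneg (convex_Icc 0 1)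
      (fun t ht => (hg t ht).continuousAt.continuousWithinAt)
      (fun t ht => (hg t (interior_subset ht)).hasDerivWithinAt) fun t ht => ?_
    have ht := interior_subset ht
    exact sub_nonneg.2 (mul_le_mul_of_nonneg_left (h _ (hb_mem t ht)) hα)
  have hg01 : g 0 ≤ g 1 := hg_mono (by simp) (by simp) zero_le_one
  simp only [g, b, AffineMap.lineMap_apply_zero, AffineMap.lineMap_apply_one] at hg01
  simp only [jensenGap]
  linarith

end JensenGap

section IsotoneGradient

variable {ι : Type*} [Fintype ι] [DecidableEq ι] {C : Set (ι → ℝ)} {Φ : (ι → ℝ) → ℝ}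
  {α β : ℝ} {p q z : ι → ℝ}

theorem jensenGap_mono_left (hC : Convex ℝ C) (hΦ : ∀ x ∈ C, DifferentiableAt ℝ Φ x)
    (hgrad : ∀ u ∈ C, ∀ v ∈ C, u ≤ v →
      ∀ i : ι, fderiv ℝ Φ u (Pi.single i 1) ≤ fderiv ℝ Φ v (Pi.single i 1))
    (hα : 0 ≤ α) (hβ : 0 ≤ β) (hαβ : α + β = 1) (hp : p ∈ C) (hq : q ∈ C) (hz : z ∈ C)
    (hzp : z ≤ p) (hpq : p ≤ q) :
    jensenGap Φ α β p z ≤ jensenGap Φ α β q z := by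
  refine jensenGap_le_of_fderiv_le hC hΦ hα hβ hαβ hp hq hz fun a ha => ?_
  have haC : a ∈ C := hC.segment_subset hp hq ha
  have hza : z ≤ a := hzp.trans (segment_subset_Icc hpq ha).1
  have hma : α • a + β • z ≤ a := by
    calc α • a + β • z ≤ α • a + β • a := by gcongr
      _ = a := by rw [← add_smul, hαβ, one_smul]
  exact ContinuousLinearMap.apply_le_apply_of_nonneg
    (hgrad _ (hC haC hz hα hβ hαβ) _ haC hma) (sub_nonneg.2 hpq)

theorem jensenGap_anti_left (hC : Convex ℝ C) (hΦ : ∀ x ∈ C, DifferentiableAt ℝ Φ x)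
    (hgrad : ∀ u ∈ C, ∀ v ∈ C, u ≤ v →
      ∀ i : ι, fderiv ℝ Φ u (Pi.single i 1) ≤ fderiv ℝ Φ v (Pi.single i 1))
    (hα : 0 ≤ α) (hβ : 0 ≤ β) (hαβ : α + β = 1) (hp : p ∈ C) (hq : q ∈ C) (hz : z ∈ C)
    (hpz : p ≤ z) (hqp : q ≤ p) :
    jensenGap Φ α β p z ≤ jensenGap Φ α β q z := by
  refine jensenGap_le_of_fderiv_le hC hΦ hα hβ hαβ hp hq hz fun a ha => ?_
  have haC : a ∈ C := hC.segment_subset hp hq ha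
  have haz : a ≤ z := (segment_subset_Icc hqp (segment_symm ℝ p q ▸ ha)).2.trans hpz
  have ham : a ≤ α • a + β • z := by
    calc a = α • a + β • a := by rw [← add_smul, hαβ, one_smul]
      _ ≤ α • a + β • z := by gcongr
  have := ContinuousLinearMap.apply_le_apply_of_nonneg
    (hgrad _ haC _ (hC haC hz hα hβ hαβ) ham) (sub_nonneg.2 hqp)
  rw [← neg_sub p q, map_neg, map_neg]
  exact neg_le_neg this

end IsotoneGradient

theorem stmt16_general (N : ℕ) (C : Set (Fin N → ℝ)) (hCc : Convex ℝ C)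
    (Φ : (Fin N → ℝ) → ℝ)
    (hdiff : ∀ z ∈ C, DifferentiableAt ℝ Φ z) (hconv : ConvexOn ℝ C Φ)
    (hgrad : ∀ u ∈ C, ∀ v ∈ C, u ≤ v →
      ∀ i : Fin N, fderiv ℝ Φ u (Pi.single i 1) ≤ fderiv ℝ Φ v (Pi.single i 1))
    (x₁ x₂ y₁ y₂ : Fin N → ℝ) (hx₁ : x₁ ∈ C) (hx₂ : x₂ ∈ C) (hy₁ : y₁ ∈ C) (hy₂ : y₂ ∈ C)
    (l : ℝ) (hl0 : 0 < l) (hl1 : l < 1)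
    (h1 : y₂ ≤ x₂) (h2 : x₂ ≤ (1 - l) • y₁ + l • y₂)
    (h3 : (1 - l) • y₁ + l • y₂ ≤ x₁) (h4 : x₁ ≤ y₁) :
    0 ≤ (1 - l) * Φ x₁ + l * Φ x₂ - Φ ((1 - l) • x₁ + l • x₂) ∧
      (1 - l) * Φ x₁ + l * Φ x₂ - Φ ((1 - l) • x₁ + l • x₂) ≤
        (1 - l) * Φ y₁ + l * Φ y₂ - Φ ((1 - l) • y₁ + l • y₂) := by
  have hl : 0 ≤ 1 - l := sub_nonneg.2 hl1.le
  have hl' : 1 - l + l = 1 := sub_add_cancel 1 l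
  have hx₂x₁ : x₂ ≤ x₁ := h2.trans h3
  refine ⟨hconv.jensenGap_nonneg hl hl0.le hl' hx₁ hx₂, ?_⟩
  calc jensenGap Φ (1 - l) l x₁ x₂
      ≤ jensenGap Φ (1 - l) l y₁ x₂ :=
        jensenGap_mono_left hCc hdiff hgrad hl hl0.le hl' hx₁ hy₁ hx₂ hx₂x₁ h4
    _ = jensenGap Φ l (1 - l) x₂ y₁ := jensenGap_comm ..
    _ ≤ jensenGap Φ l (1 - l) y₂ y₁ :=
        jensenGap_anti_left hCc hdiff hgrad hl0.le hl (add_sub_cancel l 1) hx₂ hy₂ hy₁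
          (hx₂x₁.trans h4) h1
    _ = jensenGap Φ (1 - l) l y₁ y₂ := jensenGap_comm ..

/-- Contractibility of Jensen's gap: for a differentiable convex `Φ` with isotone gradient
on an open convex `C ⊆ ℝ^N` and `y₂ ≤ x₂ ≤ (1-λ)y₁ + λy₂ ≤ x₁ ≤ y₁`, the Jensen gap for
`(x₁,x₂)` is between `0` and the Jensen gap for `(y₁,y₂)`. -/
theorem stmt16 (N : ℕ) (C : Set (Fin N → ℝ)) (hCo : IsOpen C) (hCc : Convex ℝ C)
    (Φ : (Fin N → ℝ) → ℝ)
    (hdiff : ∀ z ∈ C, DifferentiableAt ℝ Φ z) (hconv : ConvexOn ℝ C Φ)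
    (hgrad : ∀ u ∈ C, ∀ v ∈ C, u ≤ v →
      ∀ i : Fin N, fderiv ℝ Φ u (Pi.single i 1) ≤ fderiv ℝ Φ v (Pi.single i 1))
    (x₁ x₂ y₁ y₂ : Fin N → ℝ) (hx₁ : x₁ ∈ C) (hx₂ : x₂ ∈ C) (hy₁ : y₁ ∈ C) (hy₂ : y₂ ∈ C)
    (l : ℝ) (hl0 : 0 < l) (hl1 : l < 1)
    (h1 : y₂ ≤ x₂) (h2 : x₂ ≤ (1 - l) • y₁ + l • y₂)
    (h3 : (1 - l) • y₁ + l • y₂ ≤ x₁) (h4 : x₁ ≤ y₁) :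
    0 ≤ (1 - l) * Φ x₁ + l * Φ x₂ - Φ ((1 - l) • x₁ + l • x₂) ∧
      (1 - l) * Φ x₁ + l * Φ x₂ - Φ ((1 - l) • x₁ + l • x₂) ≤
        (1 - l) * Φ y₁ + l * Φ y₂ - Φ ((1 - l) • y₁ + l • y₂) :=
  stmt16_general N C hCc Φ hdiff hconv hgrad x₁ x₂ y₁ y₂ hx₁ hx₂ hy₁ hy₂ l hl0 hl1 h1 h2 h3 h4
end

section
/- Let C ⊆ ℝ^N be open and convex, Φ : C → ℝ a differentiable convex function with isotone gradient, and x ≥ y ≥ z points in C such that x ≥ (x+y+z)/3 ≥ y ≥ z (componentwise). Then (Φ(x) + Φ(y) + Φ(z))/3 + Φ((x+y+z)/3) ≥ (2/3)·[Φ((x+y)/2) + Φ((y+z)/2) + Φ((z+x)/2)]. -/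
open Set

lemma grad_aux {N : ℕ} {C : Set (Fin N → ℝ)} (hCc : Convex ℝ C) {Φ : (Fin N → ℝ) → ℝ}
    (hconv : ConvexOn ℝ C Φ) {a b : Fin N → ℝ} (ha : a ∈ C) (hb : b ∈ C)
    (hd : DifferentiableAt ℝ Φ b) : fderiv ℝ Φ b (a - b) ≤ Φ a - Φ b := by
  set g : ℝ → ℝ := fun t => Φ (AffineMap.lineMap b a t) with hg
  have hgconv : ConvexOn ℝ (Icc (0:ℝ) 1) g :=
    (hconv.comp_affineMap (AffineMap.lineMap b a)).subset
      (fun t ht => hCc.lineMap_mem hb ha ht) (convex_Icc 0 1)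
  have hinner : HasDerivAt (fun t : ℝ => AffineMap.lineMap b a t) (a - b) 0 := by
    have h1 : HasDerivAt (fun t : ℝ => t • (a - b) + b) ((1:ℝ) • (a - b)) 0 :=
      ((hasDerivAt_id (0:ℝ)).smul_const (a - b)).add_const b
    rw [one_smul] at h1
    have hfe : (fun t : ℝ => AffineMap.lineMap b a t) = fun t : ℝ => t • (a - b) + b := by
      funext t
      simp only [AffineMap.lineMap_apply_module]
      module
    rw [hfe]
    exact h1
  have hb0 : AffineMap.lineMap b a (0:ℝ) = b := AffineMap.lineMap_apply_zero b a
  have hΦ : HasFDerivAt Φ (fderiv ℝ Φ b) (AffineMap.lineMap b a (0:ℝ)) := by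
    rw [hb0]; exact hd.hasFDerivAt
  have hderiv : HasDerivAt g (fderiv ℝ Φ b (a - b)) 0 := hΦ.comp_hasDerivAt 0 hinner
  have hle := hgconv.le_slope_of_hasDerivAt (x := 0) (y := 1)
    (by norm_num) (by norm_num) one_pos hderiv
  simpa [slope_def_field, hg] using hle

/-- Popoviciu-type inequality for ordered triplets: for a differentiable convex `Φ` with
isotone gradient on an open convex `C ⊆ ℝ^N` and `x ≥ (x+y+z)/3 ≥ y ≥ z` in `C`,
`(Φ(x)+Φ(y)+Φ(z))/3 + Φ((x+y+z)/3) ≥ (2/3)[Φ((x+y)/2) + Φ((y+z)/2) + Φ((z+x)/2)]`. -/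
theorem stmt19 (N : ℕ) (C : Set (Fin N → ℝ)) (hCo : IsOpen C) (hCc : Convex ℝ C)
    (Φ : (Fin N → ℝ) → ℝ)
    (hdiff : ∀ w ∈ C, DifferentiableAt ℝ Φ w) (hconv : ConvexOn ℝ C Φ)
    (hgrad : ∀ u ∈ C, ∀ v ∈ C, u ≤ v →
      ∀ i : Fin N, fderiv ℝ Φ u (Pi.single i 1) ≤ fderiv ℝ Φ v (Pi.single i 1))
    (x y z : Fin N → ℝ) (hx : x ∈ C) (hy : y ∈ C) (hz : z ∈ C)
    (hxy : y ≤ x) (hyz : z ≤ y)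
    (h1 : (3:ℝ)⁻¹ • (x + y + z) ≤ x) (h2 : y ≤ (3:ℝ)⁻¹ • (x + y + z)) :
    (2 / 3) * (Φ ((2:ℝ)⁻¹ • (x + y)) + Φ ((2:ℝ)⁻¹ • (y + z)) + Φ ((2:ℝ)⁻¹ • (z + x))) ≤
      (Φ x + Φ y + Φ z) / 3 + Φ ((3:ℝ)⁻¹ • (x + y + z)) := by
  set m : Fin N → ℝ := (3:ℝ)⁻¹ • (x + y + z) with hm
  set p : Fin N → ℝ := (2:ℝ)⁻¹ • (x + y) with hp
  set q : Fin N → ℝ := (2:ℝ)⁻¹ • (y + z) with hq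
  set r : Fin N → ℝ := (2:ℝ)⁻¹ • (z + x) with hr
  -- memberships
  have hpC : p ∈ C := by
    have := hCc hx hy (by norm_num : (0:ℝ) ≤ 2⁻¹) (by norm_num : (0:ℝ) ≤ 2⁻¹) (by norm_num)
    have he : (2:ℝ)⁻¹ • x + (2:ℝ)⁻¹ • y = p := by rw [hp]; module
    rwa [he] at this
  have hqC : q ∈ C := by
    have := hCc hy hz (by norm_num : (0:ℝ) ≤ 2⁻¹) (by norm_num : (0:ℝ) ≤ 2⁻¹) (by norm_num)
    have he : (2:ℝ)⁻¹ • y + (2:ℝ)⁻¹ • z = q := by rw [hq]; module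
    rwa [he] at this
  have hrC : r ∈ C := by
    have := hCc hz hx (by norm_num : (0:ℝ) ≤ 2⁻¹) (by norm_num : (0:ℝ) ≤ 2⁻¹) (by norm_num)
    have he : (2:ℝ)⁻¹ • z + (2:ℝ)⁻¹ • x = r := by rw [hr]; module
    rwa [he] at this
  have hmC : m ∈ C := by
    have := hCc hx hqC (by norm_num : (0:ℝ) ≤ 3⁻¹) (by norm_num : (0:ℝ) ≤ 2/3) (by norm_num)
    have he : (3:ℝ)⁻¹ • x + ((2:ℝ)/3) • q = m := by rw [hq, hm]; module
    rwa [he] at this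
  set dp := fderiv ℝ Φ p with hdp
  set dq := fderiv ℝ Φ q with hdq
  set dr := fderiv ℝ Φ r with hdr
  -- tangent line inequalities
  have I1 : dp (x - p) ≤ Φ x - Φ p := grad_aux hCc hconv hx hpC (hdiff p hpC)
  have I2 : dp (m - p) ≤ Φ m - Φ p := grad_aux hCc hconv hmC hpC (hdiff p hpC)
  have I3 : dr (m - r) ≤ Φ m - Φ r := grad_aux hCc hconv hmC hrC (hdiff r hrC)
  have I4 : dq (y - q) ≤ Φ y - Φ q := grad_aux hCc hconv hy hqC (hdiff q hqC)
  have I5 : dq (z - q) ≤ Φ z - Φ q := grad_aux hCc hconv hz hqC (hdiff q hqC)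
  -- the vector v = m - y ≥ 0
  set v : Fin N → ℝ := m - y with hv
  have hv_nonneg : ∀ i, 0 ≤ v i := fun i => sub_nonneg.2 (h2 i)
  have hrp : r ≤ p := by
    intro i
    simp only [hp, hr, Pi.smul_apply, Pi.add_apply, smul_eq_mul]
    have := hyz i
    linarith
  -- key positivity: dp v - dr v ≥ 0
  have hv_sum : v = ∑ i, (Pi.single i (v i) : Fin N → ℝ) :=
    (Finset.univ_sum_single v).symm
  have hsingle : ∀ (i : Fin N) (c : ℝ), (Pi.single i c : Fin N → ℝ) = c • (Pi.single i 1 : Fin N → ℝ) := by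
    intro i c
    rw [← Pi.single_smul, smul_eq_mul, mul_one]
  have key : 0 ≤ dp v - dr v := by
    rw [hv_sum, map_sum, map_sum, ← Finset.sum_sub_distrib]
    apply Finset.sum_nonneg
    intro i _
    rw [hsingle i (v i), map_smul, map_smul, smul_eq_mul, smul_eq_mul, ← mul_sub]
    exact mul_nonneg (hv_nonneg i) (sub_nonneg.2 (hgrad r hrC p hpC hrp i))
  -- combine the linear functional values
  have e1 : dp (x - p) + dp (m - p) = dp v := by
    rw [← map_add]; congr 1; rw [hv, hp]; module
  have e2 : dq (y - q) + dq (z - q) = 0 := by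
    rw [← map_add]
    have : (y - q) + (z - q) = (0 : Fin N → ℝ) := by rw [hq]; module
    rw [this, map_zero]
  have e3 : (2:ℝ) * dr (m - r) = dr (-v) := by
    rw [← smul_eq_mul, ← map_smul]
    congr 1
    rw [hv, hr, hm]
    module
  have hdrv : dr (-v) = - dr v := map_neg dr v
  linarith
end
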